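/- arXiv:2303.07707 — 6 statements merged into one kernel-verified Lean document; each statement's English description precedes it below -/
import Mathlib

section
/- Let K be a field, n ≥ 3, and let θ be a collineation of the symplectic polar space C_{n,1}(K) induced by a semilinear similitude g. Then the following are equivalent: (a) there exists x ∈ K^{2n} with ω(x,gx) ≠ 0, and θ maps no totally isotropic subspace of dimension ≥ 2 to an opposite (θ has the polar opposition diagram C_{n;1}^1); (b) θ is a nontrivial central elation, i.e. there exist p ∈ K^{2n}∖{0} and a ∈ K^× such that θ equals the collineation induced by the symplectic transvection x ↦ x + a·ω(x,p)·p. -/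
/-!
STATEMENT 0: For a collineation θ of the symplectic polar space C_{n,1}(K), n ≥ 3,
induced by a semilinear similitude g, the following are equivalent:
(a) some point is mapped to an opposite point and no totally isotropic subspace of
    dimension ≥ 2 is mapped to an opposite (opposition diagram C_{n;1}^1);
(b) θ is a nontrivial central elation, i.e. θ is induced by a symplectic transvection
    τ_{p,a} : x ↦ x + a·ω(x,p)·p with p ≠ 0, a ≠ 0.
-/

open Module Submodule

noncomputable section

/-- `K^{2n}`, written as pairs of `n`-tuples. -/
abbrev Vs (K : Type) (n : ℕ) : Type := (Fin n → K) × (Fin n → K)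

/-- The standard symplectic form `ω(x,y) = ∑ⱼ (xⱼ y_{n+j} − x_{n+j} yⱼ)` on `K^{2n}`. -/
def sform {K : Type} [Field K] {n : ℕ} (x y : Vs K n) : K :=
  ∑ j, (x.1 j * y.2 j - x.2 j * y.1 j)

/-- `U` is a totally isotropic subspace of `K^{2n}`. -/
def TotIso {K : Type} [Field K] {n : ℕ} (U : Submodule K (Vs K n)) : Prop :=
  ∀ x ∈ U, ∀ y ∈ U, sform x y = 0

/-- The collineation induced by `g` maps the totally isotropic subspace `U` to an
opposite one, i.e. `U ∩ (gU)^⊥ = 0`. -/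
def MapsToOpp {K : Type} [Field K] {n : ℕ} (g : Vs K n → Vs K n)
    (U : Submodule K (Vs K n)) : Prop :=
  ∀ v ∈ U, (∀ u ∈ U, sform v (g u) = 0) → v = 0

/-- `g` is a `σ`-semilinear bijection of `K^{2n}` which is a similitude of the standard
symplectic form, with multiplier `lam`; such a `g` induces a collineation of the
symplectic polar space `C_{n,1}(K)`. -/
structure IsSymplecticCollineation {K : Type} [Field K] {n : ℕ} (σ : K ≃+* K) (lam : K)
    (g : Vs K n → Vs K n) : Prop where
  bij : Function.Bijective g
  map_add : ∀ x y, g (x + y) = g x + g y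
  map_smulc : ∀ (a : K) (x : Vs K n), g (a • x) = σ a • g x
  lam_ne : lam ≠ 0
  sim : ∀ x y, sform (g x) (g y) = lam * σ (sform x y)

/-- The symplectic transvection `τ_{p,a} : x ↦ x + a·ω(x,p)·p`. -/
def transvection {K : Type} [Field K] {n : ℕ} (p : Vs K n) (a : K) (x : Vs K n) : Vs K n :=
  x + (a * sform x p) • p

set_option maxHeartbeats 1000000
namespace Aux

variable {K : Type} [Field K] {n : ℕ}

lemma sform_add_left (x x' y : Vs K n) : sform (x + x') y = sform x y + sform x' y := by
  simp only [sform, ← Finset.sum_add_distrib]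
  refine Finset.sum_congr rfl fun j _ => ?_
  simp only [Prod.fst_add, Prod.snd_add, Pi.add_apply]
  ring

lemma sform_add_right (x y y' : Vs K n) : sform x (y + y') = sform x y + sform x y' := by
  simp only [sform, ← Finset.sum_add_distrib]
  refine Finset.sum_congr rfl fun j _ => ?_
  simp only [Prod.fst_add, Prod.snd_add, Pi.add_apply]
  ring

lemma sform_smul_left (a : K) (x y : Vs K n) : sform (a • x) y = a * sform x y := by
  simp only [sform, Finset.mul_sum]
  refine Finset.sum_congr rfl fun j _ => ?_
  simp only [Prod.smul_fst, Prod.smul_snd, Pi.smul_apply, smul_eq_mul]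
  ring

lemma sform_smul_right (a : K) (x y : Vs K n) : sform x (a • y) = a * sform x y := by
  simp only [sform, Finset.mul_sum]
  refine Finset.sum_congr rfl fun j _ => ?_
  simp only [Prod.smul_fst, Prod.smul_snd, Pi.smul_apply, smul_eq_mul]
  ring

lemma sform_self (x : Vs K n) : sform x x = 0 := by
  simp only [sform]
  refine Finset.sum_eq_zero fun j _ => by ring

lemma sform_skew (x y : Vs K n) : sform x y = - sform y x := by
  simp only [sform, ← Finset.sum_neg_distrib]
  refine Finset.sum_congr rfl fun j _ => by ring

/-- The symplectic form as a bilinear map. -/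
def B2 : Vs K n →ₗ[K] Vs K n →ₗ[K] K :=
  LinearMap.mk₂ K sform sform_add_left sform_smul_left sform_add_right sform_smul_right

@[simp] lemma B2_apply (x y : Vs K n) : B2 x y = sform x y := rfl

lemma sform_zero_left (y : Vs K n) : sform 0 y = 0 := by simp [sform]
lemma sform_zero_right (x : Vs K n) : sform x 0 = 0 := by simp [sform]

lemma sform_neg_right (x y : Vs K n) : sform x (-y) = - sform x y := by
  have := sform_smul_right (-1 : K) x y; simpa using this

lemma sform_sub_right (x y y' : Vs K n) : sform x (y - y') = sform x y - sform x y' := by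
  rw [sub_eq_add_neg, sform_add_right, sform_neg_right]; ring

lemma sform_sub_left (x x' y : Vs K n) : sform (x - x') y = sform x y - sform x' y := by
  rw [sub_eq_add_neg, sform_add_left, show -x' = (-1:K) • x' by simp, sform_smul_left]
  ring

/-- Nondegeneracy, right slot. -/
lemma eq_zero_of_sform_right (x : Vs K n) (h : ∀ y, sform x y = 0) : x = 0 := by
  have h1 : ∀ j, x.1 j = 0 := by
    intro j
    have := h (0, Pi.single j 1)
    simpa [sform, Pi.single_apply, Finset.sum_ite_eq'] using this
  have h2 : ∀ j, x.2 j = 0 := by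
    intro j
    have := h (Pi.single j 1, 0)
    have h' : -x.2 j = 0 := by
      simpa [sform, Pi.single_apply, Finset.sum_ite_eq'] using this
    exact neg_eq_zero.mp h'
  ext j
  · exact h1 j
  · exact h2 j

lemma eq_zero_of_sform_left (y : Vs K n) (h : ∀ x, sform x y = 0) : y = 0 := by
  apply eq_zero_of_sform_right
  intro x
  rw [sform_skew, h x, neg_zero]

lemma exists_sform_ne_left {y : Vs K n} (h : y ≠ 0) : ∃ x, sform x y ≠ 0 := by
  by_contra hc
  push_neg at hc
  exact h (eq_zero_of_sform_left y hc)

lemma exists_sform_ne_right {x : Vs K n} (h : x ≠ 0) : ∃ y, sform x y ≠ 0 := by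
  by_contra hc
  push_neg at hc
  exact h (eq_zero_of_sform_right x hc)

lemma finrank_Vs : finrank K (Vs K n) = 2 * n := by
  simp [Module.finrank_prod]; ring

end Aux

noncomputable section
namespace Aux2

variable {K : Type} [Field K] {V : Type} [AddCommGroup V] [Module K V]

/-- A functional with larger kernel is a multiple. -/
lemma functional_factor (φ ψ : V →ₗ[K] K) (h : LinearMap.ker φ ≤ LinearMap.ker ψ) :
    ∃ c : K, ψ = c • φ := by
  by_cases hφ : φ = 0
  · refine ⟨0, LinearMap.ext fun v => ?_⟩
    have hv : v ∈ LinearMap.ker ψ := h (by simp [hφ])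
    simpa using hv
  · obtain ⟨a, ha⟩ : ∃ a, φ a ≠ 0 := by
      by_contra hc; push_neg at hc
      exact hφ (LinearMap.ext fun v => by simp [hc v])
    refine ⟨ψ a / φ a, LinearMap.ext fun v => ?_⟩
    have hker : v - (φ v / φ a) • a ∈ LinearMap.ker φ := by
      simp only [LinearMap.mem_ker, map_sub, map_smul, smul_eq_mul]
      field_simp; ring
    have hψ : ψ (v - (φ v / φ a) • a) = 0 := h hker
    simp only [map_sub, map_smul, smul_eq_mul, sub_eq_zero] at hψ
    simp only [LinearMap.smul_apply, smul_eq_mul]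
    rw [hψ]; field_simp

/-- A functional vanishing on the intersection of two kernels is a combination. -/
lemma functional_factor₂ (φ₁ φ₂ ψ : V →ₗ[K] K)
    (h : LinearMap.ker φ₁ ⊓ LinearMap.ker φ₂ ≤ LinearMap.ker ψ) :
    ∃ c d : K, ψ = c • φ₁ + d • φ₂ := by
  set W := LinearMap.ker φ₁
  have h1 : LinearMap.ker (φ₂.domRestrict W) ≤ LinearMap.ker (ψ.domRestrict W) := by
    intro x hx
    simp only [LinearMap.mem_ker, LinearMap.domRestrict_apply] at hx ⊢
    exact h ⟨x.2, hx⟩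
  obtain ⟨d, hd⟩ := functional_factor _ _ h1
  have h2 : W ≤ LinearMap.ker (ψ - d • φ₂) := by
    intro v hv
    have := congrArg (fun f => f ⟨v, hv⟩) hd
    simp only [LinearMap.domRestrict_apply, LinearMap.smul_apply, smul_eq_mul] at this
    simp only [LinearMap.mem_ker, LinearMap.sub_apply, LinearMap.smul_apply, smul_eq_mul, this]
    ring
  obtain ⟨c, hc⟩ := functional_factor φ₁ _ h2
  exact ⟨c, d, by rw [← hc]; abel⟩

/-- A submodule covered by the union of two submodules lies in one of them. -/
lemma sub_union (A B C : Submodule K V) (h : ∀ x ∈ C, x ∈ A ∨ x ∈ B) :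
    (∀ x ∈ C, x ∈ A) ∨ (∀ x ∈ C, x ∈ B) := by
  by_contra hc
  push_neg at hc
  obtain ⟨⟨a, haC, haA⟩, ⟨b, hbC, hbB⟩⟩ := hc
  have haB : a ∈ B := (h a haC).resolve_left haA
  have hbA : b ∈ A := (h b hbC).resolve_right hbB
  have hab : a + b ∈ C := C.add_mem haC hbC
  rcases h _ hab with hA | hB
  · exact haA (by simpa using A.sub_mem hA hbA)
  · exact hbB (by simpa using B.sub_mem hB haB)

variable [FiniteDimensional K V]

/-- Cutting with the kernel of one functional drops the rank by at most 1. -/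
lemma finrank_inf_ker (S : Submodule K V) (φ : V →ₗ[K] K) :
    finrank K S ≤ finrank K (S ⊓ LinearMap.ker φ : Submodule K V) + 1 := by
  have hrn := LinearMap.finrank_range_add_finrank_ker (φ.domRestrict S)
  have hker : LinearMap.ker (φ.domRestrict S) = comap S.subtype (LinearMap.ker φ) :=
    LinearMap.ker_domRestrict S φ
  have hco : finrank K (comap S.subtype (LinearMap.ker φ)) =
      finrank K (S ⊓ LinearMap.ker φ : Submodule K V) := by
    rw [← Submodule.map_comap_subtype]
    exact (Submodule.equivMapOfInjective S.subtype S.injective_subtype _).finrank_eq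
  have hrange : finrank K (LinearMap.range (φ.domRestrict S)) ≤ 1 := by
    simpa using (LinearMap.range (φ.domRestrict S)).finrank_le
  rw [hker, hco] at hrn
  omega

end Aux2

namespace Aux
open Aux2

variable {K : Type} [Field K] {n : ℕ}

/-- `F y` is the functional `x ↦ sform x y`. -/
def F : Vs K n →ₗ[K] Module.Dual K (Vs K n) := (B2 (K := K) (n := n)).flip

@[simp] lemma F_apply (y x : Vs K n) : F y x = sform x y := rfl

lemma F_inj : Function.Injective (F (K := K) (n := n)) := by
  intro y y' h
  have : ∀ x, sform x (y - y') = 0 := by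
    intro x
    rw [sform_sub_right]
    have := congrArg (fun f => f x) h
    simp only [F_apply] at this
    simp [this]
  have := eq_zero_of_sform_left _ this
  exact sub_eq_zero.mp this

lemma perp_span_single (u x : Vs K n)
    (h : ∀ v, sform v u = 0 → sform v x = 0) : ∃ a : K, x = a • u := by
  have hker : LinearMap.ker (F u) ≤ LinearMap.ker (F x) := by
    intro v hv
    simp only [LinearMap.mem_ker, F_apply] at hv ⊢
    exact h v hv
  obtain ⟨c, hc⟩ := functional_factor _ _ hker
  refine ⟨c, F_inj ?_⟩
  rw [hc, map_smul]

lemma perp_span_pair (u₁ u₂ x : Vs K n)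
    (h : ∀ v, sform v u₁ = 0 → sform v u₂ = 0 → sform v x = 0) :
    ∃ a b : K, x = a • u₁ + b • u₂ := by
  have hker : LinearMap.ker (F u₁) ⊓ LinearMap.ker (F u₂) ≤ LinearMap.ker (F x) := by
    intro v hv
    simp only [Submodule.mem_inf, LinearMap.mem_ker, F_apply] at hv ⊢
    exact h v hv.1 hv.2
  obtain ⟨c, d, hcd⟩ := functional_factor₂ _ _ _ hker
  refine ⟨c, d, F_inj ?_⟩
  rw [hcd, map_add, map_smul, map_smul]

variable (hn' : 2 ≤ n)

lemma finrank_pos_aux {S : Submodule K (Vs K n)} (h : 1 ≤ finrank K S) :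
    ∃ x ∈ S, x ≠ 0 := by
  apply Submodule.exists_mem_ne_zero_of_ne_bot
  intro hb
  rw [hb, finrank_bot] at h
  omega

/-- Any subspace of rank at least 3 contains two "independent orthogonal" vectors. -/
lemma ortho_pair_in {S : Submodule K (Vs K n)} (h : 3 ≤ finrank K S) :
    ∃ x ∈ S, ∃ y ∈ S, sform x y = 0 ∧ sform y x = 0 ∧ x ≠ 0 ∧ ∀ a : K, y ≠ a • x := by
  obtain ⟨x, hxS, hx0⟩ := finrank_pos_aux (by omega : 1 ≤ finrank K S)
  have hT : 2 ≤ finrank K (S ⊓ LinearMap.ker (F x) : Submodule K (Vs K n)) := by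
    have := finrank_inf_ker S (F x)
    omega
  have hnot : ¬ (S ⊓ LinearMap.ker (F x) : Submodule K (Vs K n)) ≤ span K {x} := by
    intro hle
    have h1 : finrank K (span K {x}) = 1 := finrank_span_singleton hx0
    have := Submodule.finrank_mono hle
    omega
  rw [SetLike.not_le_iff_exists] at hnot
  obtain ⟨y, hyT, hynot⟩ := hnot
  rcases Submodule.mem_inf.mp hyT with ⟨hyS, hyk⟩
  simp only [LinearMap.mem_ker, F_apply] at hyk
  refine ⟨x, hxS, y, hyS, by rw [sform_skew, hyk, neg_zero], hyk, hx0, fun a hya => ?_⟩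
  exact hynot (by rw [hya]; exact Submodule.smul_mem _ _ (Submodule.mem_span_singleton_self x))

lemma pair_indep {x y : Vs K n} (hx : x ≠ 0) (hy : ∀ a : K, y ≠ a • x) :
    LinearIndependent K ![x, y] := by
  rw [LinearIndependent.pair_iff]
  intro s t hst
  by_cases ht : t = 0
  · subst ht
    simp only [smul_zero, zero_smul, add_zero] at hst
    rcases smul_eq_zero.mp hst with h | h
    · exact ⟨h, rfl⟩
    · exact absurd h hx
  · exfalso
    apply hy (t⁻¹ * (-s))
    rw [add_comm] at hst
    have h1 : t • y = (-s) • x := by rw [neg_smul, add_eq_zero_iff_eq_neg.mp hst]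
    calc y = t⁻¹ • (t • y) := by rw [smul_smul, inv_mul_cancel₀ ht, one_smul]
    _ = (t⁻¹ * -s) • x := by rw [h1, smul_smul]

lemma finrank_span_pair {x y : Vs K n} (hx : x ≠ 0) (hy : ∀ a : K, y ≠ a • x) :
    finrank K (span K {x, y}) = 2 := by
  have hind := pair_indep hx hy
  have hr : Set.range ![x, y] = {x, y} := by
    simp only [Matrix.range_cons, Matrix.range_empty, Set.union_empty, Set.union_singleton]
    exact Set.pair_comm y x
  have := finrank_span_eq_card hind
  rw [hr] at this
  simpa using this

lemma totIso_span_pair {x y : Vs K n} (h : sform x y = 0) :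
    TotIso (span K {x, y}) := by
  intro v hv w hw
  obtain ⟨a, b, rfl⟩ := Submodule.mem_span_pair.mp hv
  obtain ⟨c, d, rfl⟩ := Submodule.mem_span_pair.mp hw
  simp only [sform_add_left, sform_add_right, sform_smul_left, sform_smul_right,
    sform_self, h, sform_skew y x]
  ring

end Aux

namespace Aux
open Aux2

variable {K : Type} [Field K] {n : ℕ}

/-- No totally isotropic subspace has rank `> n`; we only need a weak version. -/
lemma tot_iso_bound (hn : 3 ≤ n) (S : Submodule K (Vs K n))
    (hti : ∀ x ∈ S, ∀ y ∈ S, sform x y = 0)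
    (hbig : 2 * n - 2 ≤ finrank K S) : False := by
  obtain ⟨C, hC⟩ := Submodule.exists_isCompl S
  have hsum : finrank K S + finrank K C = 2 * n := by
    rw [finrank_add_eq_of_isCompl hC, finrank_Vs]
  set θ : S →ₗ[K] Module.Dual K C :=
    { toFun := fun w => (F (w : Vs K n)).domRestrict C
      map_add' := by
        intro w w'
        ext c
        simp [F_apply, sform_add_right]
      map_smul' := by
        intro a w
        ext c
        simp [F_apply, sform_smul_right] } with hθ
  have hinj : Function.Injective θ := by
    rw [← LinearMap.ker_eq_bot]
    rw [Submodule.eq_bot_iff]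
    rintro ⟨w, hwS⟩ hw
    simp only [LinearMap.mem_ker, hθ] at hw
    have hC0 : ∀ c ∈ C, sform c w = 0 := by
      intro c hc
      have := congrArg (fun f => f ⟨c, hc⟩) hw
      simpa [F_apply] using this
    have : w = 0 := by
      apply eq_zero_of_sform_left
      intro v
      have hv : v ∈ S ⊔ C := by rw [hC.sup_eq_top]; trivial
      obtain ⟨s, hs, c, hc, rfl⟩ := Submodule.mem_sup.mp hv
      rw [sform_add_left, hti s hs w hwS, hC0 c hc, add_zero]
    simpa using this
  have hle : finrank K S ≤ finrank K C := by
    have := LinearMap.finrank_le_finrank_of_injective hinj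
    rwa [Subspace.dual_finrank_eq] at this
  omega

section WithG

variable (σ : K ≃+* K) (lam : K) (g : Vs K n → Vs K n)

lemma g_zero (hg : IsSymplecticCollineation σ lam g) : g 0 = 0 := by
  have := hg.map_add 0 0
  simpa using this.symm

lemma g_ne (hg : IsSymplecticCollineation σ lam g) {v : Vs K n} (hv : v ≠ 0) : g v ≠ 0 := by
  intro h
  exact hv (hg.bij.1 (by rw [h, g_zero σ lam g hg]))

/-- The key "plane" property extracted from point-domesticity on planes. -/
def PlaneProp : Prop :=
  ∀ x y : Vs K n, sform x y = 0 → x ≠ 0 → (∀ a : K, y ≠ a • x) →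
    ∃ w : Vs K n, w ≠ 0 ∧ w ∈ span K {x, y} ∧ ∀ u ∈ span K {x, y}, sform w (g u) = 0

/-- Lemma 1: every point with `ω(u, gu) = 0` is fixed by the collineation. -/
lemma eigen (hg : IsSymplecticCollineation σ lam g) (hpl : PlaneProp g)
    (u : Vs K n) (hu : u ≠ 0) (hQ : sform u (g u) = 0) :
    ∃ c : K, c ≠ 0 ∧ g u = c • u := by
  classical
  set e := Function.invFun g with he
  have hge : ∀ y, g (e y) = y := Function.rightInverse_invFun hg.bij.2
  set A : Submodule K (Vs K n) :=
    { carrier := {v | sform u (g v) = 0}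
      add_mem' := by
        intro v w hv hw
        simp only [Set.mem_setOf_eq] at hv hw ⊢
        rw [hg.map_add, sform_add_right, hv, hw, add_zero]
      zero_mem' := by
        simp only [Set.mem_setOf_eq]
        rw [g_zero σ lam g hg, sform_zero_right]
      smul_mem' := by
        intro a v hv
        simp only [Set.mem_setOf_eq] at hv ⊢
        rw [hg.map_smulc, sform_smul_right, hv, mul_zero] } with hA
  set B : Submodule K (Vs K n) := LinearMap.ker (F u) ⊓ LinearMap.ker (F (g u)) with hB
  have hcover : ∀ v ∈ LinearMap.ker (F u), v ∈ A ∨ v ∈ B := by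
    intro v hv
    simp only [LinearMap.mem_ker, F_apply] at hv
    by_cases hs : ∃ a : K, v = a • u
    · obtain ⟨a, rfl⟩ := hs
      left
      show sform u (g (a • u)) = 0
      rw [hg.map_smulc, sform_smul_right, hQ, mul_zero]
    · push_neg at hs
      have hxy : sform u v = 0 := by rw [sform_skew, hv, neg_zero]
      obtain ⟨w, hw0, hwm, hwperp⟩ := hpl u v hxy hu hs
      obtain ⟨s, t, rfl⟩ := Submodule.mem_span_pair.mp hwm
      have h1 : s * sform u (g u) + t * sform v (g u) = 0 := by
        have := hwperp u (Submodule.subset_span (by simp))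
        rwa [sform_add_left, sform_smul_left, sform_smul_left] at this
      have h2 : s * sform u (g v) + t * sform v (g v) = 0 := by
        have := hwperp v (Submodule.subset_span (by simp))
        rwa [sform_add_left, sform_smul_left, sform_smul_left] at this
      by_cases ht : t = 0
      · have hs0 : s ≠ 0 := by
          intro h0
          exact hw0 (by rw [h0, ht, zero_smul, zero_smul, add_zero])
        left
        show sform u (g v) = 0
        rw [ht, zero_mul, add_zero] at h2
        exact (mul_eq_zero.mp h2).resolve_left hs0
      · right
        rw [hQ, mul_zero, zero_add] at h1
        have := (mul_eq_zero.mp h1).resolve_left ht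
        exact Submodule.mem_inf.mpr ⟨by simpa [F_apply] using hv, by simpa [F_apply] using this⟩
  rcases sub_union A B (LinearMap.ker (F u)) hcover with hcase | hcase
  · -- A case : g u proportional via inverse
    have hperp : ∀ v, sform v u = 0 → sform v (e u) = 0 := by
      intro v hv
      have hvA : v ∈ A := hcase v (by simpa [F_apply] using hv)
      have hvA' : sform u (g v) = 0 := hvA
      have hgv : sform (g v) u = 0 := by rw [sform_skew, hvA', neg_zero]
      have := hg.sim v (e u)
      rw [hge u, hgv] at this
      have hσ : σ (sform v (e u)) = 0 := by
        rcases mul_eq_zero.mp this.symm with h | h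
        · exact absurd h hg.lam_ne
        · exact h
      exact (map_eq_zero_iff σ σ.injective).mp hσ
    obtain ⟨b, hb⟩ := perp_span_single u (e u) hperp
    have heu0 : e u ≠ 0 := by
      intro h0
      apply hu
      rw [← hge u, h0, g_zero σ lam g hg]
    have hb0 : b ≠ 0 := by
      intro h0
      rw [h0, zero_smul] at hb
      exact heu0 hb
    have hgu : u = σ b • g u := by
      calc u = g (e u) := (hge u).symm
      _ = g (b • u) := by rw [hb]
      _ = σ b • g u := hg.map_smulc b u
    refine ⟨(σ b)⁻¹, inv_ne_zero (by simpa using hb0), ?_⟩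
    conv_rhs => rw [hgu]
    rw [smul_smul, inv_mul_cancel₀ (by simpa using hb0), one_smul]
  · -- B case : direct
    have hperp : ∀ v, sform v u = 0 → sform v (g u) = 0 := by
      intro v hv
      have hvB : v ∈ B := hcase v (by simpa [F_apply] using hv)
      exact (Submodule.mem_inf.mp hvB).2
    obtain ⟨c, hc⟩ := perp_span_single u (g u) hperp
    refine ⟨c, ?_, hc⟩
    intro h0
    rw [h0, zero_smul] at hc
    exact g_ne σ lam g hg hu hc

end WithG
end Aux

namespace Aux
open Aux2

variable {K : Type} [Field K] {n : ℕ}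

lemma forward (hn : 3 ≤ n) (σ : K ≃+* K) (lam : K) (g : Vs K n → Vs K n)
    (hg : IsSymplecticCollineation σ lam g)
    (H1 : ∃ x : Vs K n, sform x (g x) ≠ 0)
    (H2 : ∀ U : Submodule K (Vs K n), TotIso U → 2 ≤ finrank K U → ¬ MapsToOpp g U) :
    ∃ p : Vs K n, p ≠ 0 ∧ ∃ a : K, a ≠ 0 ∧
      ∀ v : Vs K n, v ≠ 0 → span K {g v} = span K {transvection p a v} := by
  classical
  -- Step A : the plane property
  have hpl : PlaneProp g := by
    intro x y hxy hx hy
    have hti := totIso_span_pair (K := K) (n := n) hxy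
    have hfr : 2 ≤ finrank K (span K {x, y}) := le_of_eq (finrank_span_pair hx hy).symm
    have hnm := H2 _ hti hfr
    unfold MapsToOpp at hnm
    push_neg at hnm
    obtain ⟨w, hwm, hwperp, hw0⟩ := hnm
    exact ⟨w, hw0, hwm, hwperp⟩
  -- Step B : a first fixed point u1
  have h01 : (⟨0, by omega⟩ : Fin n) ≠ (⟨1, by omega⟩ : Fin n) := by
    intro h
    simpa using congrArg Fin.val h
  set x₁ : Vs K n := ((Pi.single (⟨0, by omega⟩ : Fin n) 1 : Fin n → K), 0) with hx₁
  set y₁ : Vs K n := ((Pi.single (⟨1, by omega⟩ : Fin n) 1 : Fin n → K), 0) with hy₁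
  have hx₁0 : x₁ ≠ 0 := by
    intro h
    have := congrArg (fun z : Vs K n => z.1 ⟨0, by omega⟩) h
    simpa [hx₁] using this
  have hxy₁ : sform x₁ y₁ = 0 := by simp [sform, hx₁, hy₁]
  have hy₁span : ∀ a : K, y₁ ≠ a • x₁ := by
    intro a h
    have := congrArg (fun z : Vs K n => z.1 ⟨1, by omega⟩) h
    simp [hx₁, hy₁, Pi.single_apply, h01.symm, Fin.ext_iff] at this
  obtain ⟨u1, hu10, hu1m, hu1perp⟩ := hpl x₁ y₁ hxy₁ hx₁0 hy₁span
  have hQu1 : sform u1 (g u1) = 0 := hu1perp u1 hu1m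
  obtain ⟨c, hc0, hgu1⟩ := eigen σ lam g hg hpl u1 hu10 hQu1
  -- the finrank of a double perp
  have hdp : ∀ z₁ z₂ : Vs K n,
      2 * n - 2 ≤ finrank K (LinearMap.ker (F z₁) ⊓ LinearMap.ker (F z₂) : Submodule K (Vs K n)) := by
    intro z₁ z₂
    have h1 := finrank_inf_ker (⊤ : Submodule K (Vs K n)) (F z₁)
    have h2 := finrank_inf_ker (LinearMap.ker (F z₁)) (F z₂)
    rw [top_inf_eq] at h1
    have htop : finrank K (⊤ : Submodule K (Vs K n)) = 2 * n := by
      rw [finrank_top, finrank_Vs]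
    omega
  -- Step C : eigenvalues agree on independent orthogonal fixed points
  have pairEq : ∀ (p q : Vs K n) (cp cq : K), p ≠ 0 → q ≠ 0 → (∀ a : K, q ≠ a • p) →
      sform p q = 0 → g p = cp • p → g q = cq • q → cq = cp := by
    intro p q cp cq hp hq hspan hpq hgp hgq
    have hqp : sform q p = 0 := by rw [sform_skew, hpq, neg_zero]
    have hw0 : p + q ≠ 0 := by
      intro h
      exact hspan (-1) (by rw [neg_smul, one_smul, eq_neg_iff_add_eq_zero, add_comm]; exact h)
    have hgw : g (p + q) = cp • p + cq • q := by rw [hg.map_add, hgp, hgq]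
    have hQw : sform (p + q) (g (p + q)) = 0 := by
      rw [hgw, sform_add_left, sform_add_right, sform_add_right,
        sform_smul_right, sform_smul_right, sform_smul_right, sform_smul_right,
        sform_self, sform_self, hpq, hqp]
      ring
    obtain ⟨d, _, hd⟩ := eigen σ lam g hg hpl (p + q) hw0 hQw
    have heq : (cp - d) • p + (cq - d) • q = 0 := by
      rw [sub_smul, sub_smul]
      have : cp • p + cq • q = d • p + d • q := by rw [← hgw, hd, smul_add]
      rw [show cp • p - d • p + (cq • q - d • q) = (cp • p + cq • q) - (d • p + d • q) by abel,
        this, sub_self]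
    have hind' := pair_indep hp hspan
    have hind := LinearIndependent.pair_iff.mp hind' _ _ heq
    have h1 : cp = d := sub_eq_zero.mp hind.1
    have h2 : cq = d := sub_eq_zero.mp hind.2
    rw [h1, h2]
  -- Step C2 : a second fixed point orthogonal to u1 ; σ = id
  obtain ⟨z, hz⟩ := exists_sform_ne_right hu10
  obtain ⟨x₂, hx₂m, y₂, hy₂m, hxy₂, _, hx₂0, hy₂span⟩ :=
    ortho_pair_in (S := LinearMap.ker (F u1) ⊓ LinearMap.ker (F z))
      (by have := hdp u1 z; omega)
  obtain ⟨v1, hv10, hv1m, hv1perp⟩ := hpl x₂ y₂ hxy₂ hx₂0 hy₂span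
  have hv1W : v1 ∈ LinearMap.ker (F u1) ⊓ LinearMap.ker (F z) := by
    have hle : span K {x₂, y₂} ≤ LinearMap.ker (F u1) ⊓ LinearMap.ker (F z) := by
      rw [Submodule.span_le]
      intro t ht
      rcases Set.mem_insert_iff.mp ht with rfl | ht
      · exact hx₂m
      · rw [Set.mem_singleton_iff.mp ht]; exact hy₂m
    exact hle hv1m
  have hv1u1 : sform v1 u1 = 0 := by
    have := (Submodule.mem_inf.mp hv1W).1
    simpa using this
  have hv1z : sform v1 z = 0 := by
    have := (Submodule.mem_inf.mp hv1W).2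
    simpa using this
  have hQv1 : sform v1 (g v1) = 0 := hv1perp v1 hv1m
  obtain ⟨c₂, hc₂0, hgv1⟩ := eigen σ lam g hg hpl v1 hv10 hQv1
  have hv1span : ∀ a : K, v1 ≠ a • u1 := by
    intro a h
    have : sform v1 z = a * sform u1 z := by rw [h, sform_smul_left]
    rw [hv1z] at this
    have ha0 : a = 0 := by
      rcases mul_eq_zero.mp this.symm with h' | h'
      · exact h'
      · exact absurd h' hz
    rw [ha0, zero_smul] at h
    exact hv10 h
  have hu1v1 : sform u1 v1 = 0 := by rw [sform_skew, hv1u1, neg_zero]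
  have hc₂ : c₂ = c := pairEq u1 v1 c c₂ hu10 hv10 hv1span hu1v1 hgu1 hgv1
  have hσ : ∀ a : K, σ a = a := by
    intro a
    by_cases ha : a = 0
    · rw [ha, map_zero]
    have hw0 : u1 + a • v1 ≠ 0 := by
      intro h
      apply hv1span (-a⁻¹)
      have h1 : a • v1 = -u1 := by
        rw [eq_neg_iff_add_eq_zero, add_comm]
        exact h
      calc v1 = a⁻¹ • (a • v1) := by rw [smul_smul, inv_mul_cancel₀ ha, one_smul]
      _ = (-a⁻¹) • u1 := by rw [h1, smul_neg, neg_smul]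
    have hgw : g (u1 + a • v1) = c • u1 + (σ a * c₂) • v1 := by
      rw [hg.map_add, hg.map_smulc, hgu1, hgv1, smul_smul]
    have hQw : sform (u1 + a • v1) (g (u1 + a • v1)) = 0 := by
      rw [hgw, sform_add_left, sform_add_right, sform_add_right,
        sform_smul_left, sform_smul_left, sform_smul_right, sform_smul_right,
        sform_smul_right, sform_smul_right, sform_self, sform_self, hu1v1, hv1u1]
      ring
    obtain ⟨d, hd0, hd⟩ := eigen σ lam g hg hpl _ hw0 hQw
    have heq : (c - d) • u1 + (σ a * c₂ - d * a) • v1 = 0 := by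
      rw [sub_smul, sub_smul]
      have h1 : c • u1 + (σ a * c₂) • v1 = d • u1 + (d * a) • v1 := by
        rw [← hgw, hd, smul_add, smul_smul]
      rw [show c • u1 - d • u1 + ((σ a * c₂) • v1 - (d * a) • v1)
          = (c • u1 + (σ a * c₂) • v1) - (d • u1 + (d * a) • v1) by abel, h1, sub_self]
    have hind' := pair_indep hu10 hv1span
    have hind := LinearIndependent.pair_iff.mp hind' _ _ heq
    have h1 : c = d := sub_eq_zero.mp hind.1
    have h2 : σ a * c₂ = d * a := sub_eq_zero.mp hind.2
    rw [hc₂, ← h1, mul_comm c a] at h2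
    exact mul_right_cancel₀ hc0 h2
  -- Step D : all isotropic-image points have the same eigenvalue c
  have hconst : ∀ w : Vs K n, w ≠ 0 → sform w (g w) = 0 → g w = c • w := by
    intro w hw hQw
    obtain ⟨cw, hcw0, hgw⟩ := eigen σ lam g hg hpl w hw hQw
    by_cases hA : ∃ a : K, w = a • u1
    · obtain ⟨a, rfl⟩ := hA
      rw [hg.map_smulc, hσ, hgu1, smul_smul, smul_smul, mul_comm]
    · push_neg at hA
      by_cases hO : sform u1 w = 0
      · have := pairEq u1 w c cw hu10 hw hA hO hgu1 hgw
        rw [hgw, this]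
      · obtain ⟨x₃, hx₃m, y₃, hy₃m, hxy₃, _, hx₃0, hy₃span⟩ :=
          ortho_pair_in (S := LinearMap.ker (F u1) ⊓ LinearMap.ker (F w))
            (by have := hdp u1 w; omega)
        obtain ⟨v, hv0, hvm, hvperp⟩ := hpl x₃ y₃ hxy₃ hx₃0 hy₃span
        have hvW : v ∈ LinearMap.ker (F u1) ⊓ LinearMap.ker (F w) := by
          have hle : span K {x₃, y₃} ≤ LinearMap.ker (F u1) ⊓ LinearMap.ker (F w) := by
            rw [Submodule.span_le]
            intro t ht
            rcases Set.mem_insert_iff.mp ht with rfl | ht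
            · exact hx₃m
            · rw [Set.mem_singleton_iff.mp ht]; exact hy₃m
          exact hle hvm
        have hvu1 : sform v u1 = 0 := by
          have := (Submodule.mem_inf.mp hvW).1; simpa using this
        have hvw : sform v w = 0 := by
          have := (Submodule.mem_inf.mp hvW).2; simpa using this
        have hQv : sform v (g v) = 0 := hvperp v hvm
        obtain ⟨cv, hcv0, hgv⟩ := eigen σ lam g hg hpl v hv0 hQv
        have hvspanu1 : ∀ a : K, v ≠ a • u1 := by
          intro a h
          have : sform v w = a * sform u1 w := by rw [h, sform_smul_left]
          rw [hvw] at this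
          rcases mul_eq_zero.mp this.symm with h' | h'
          · rw [h', zero_smul] at h; exact hv0 h
          · exact hO h'
        have hvspanw : ∀ a : K, v ≠ a • w := by
          intro a h
          have h1 : sform v u1 = a * sform w u1 := by rw [h, sform_smul_left]
          rw [hvu1] at h1
          have hwu1 : sform w u1 ≠ 0 := by
            intro h2
            apply hO
            rw [sform_skew, h2, neg_zero]
          rcases mul_eq_zero.mp h1.symm with h' | h'
          · rw [h', zero_smul] at h; exact hv0 h
          · exact hwu1 h'
        have hu1v : sform u1 v = 0 := by rw [sform_skew, hvu1, neg_zero]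
        have hwv : sform w v = 0 := by rw [sform_skew, hvw, neg_zero]
        have h1 : cv = c := pairEq u1 v c cv hu10 hv0 hvspanu1 hu1v hgu1 hgv
        have h2 : cv = cw := pairEq w v cw cv hw hv0 hvspanw hwv hgw hgv
        rw [hgw, ← h2, h1]
  -- Step E : the subspace N of fixed points
  set gL : Vs K n →ₗ[K] Vs K n :=
    { toFun := g
      map_add' := hg.map_add
      map_smul' := fun a x => by
        show g (a • x) = (RingHom.id K) a • g x
        rw [hg.map_smulc, hσ, RingHom.id_apply] } with hgL
  set Dm : Vs K n →ₗ[K] Vs K n := gL - c • LinearMap.id with hDm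
  have hDapp : ∀ x, Dm x = g x - c • x := fun x => rfl
  set N := LinearMap.ker Dm with hN
  have hNmem : ∀ x, x ∈ N ↔ sform x (g x) = 0 := by
    intro x
    constructor
    · intro hx
      have hx' : Dm x = 0 := hx
      rw [hDapp] at hx'
      have : g x = c • x := sub_eq_zero.mp hx'
      rw [this, sform_smul_right, sform_self, mul_zero]
    · intro hx
      by_cases hx0 : x = 0
      · rw [hx0]; exact zero_mem N
      · show Dm x = 0
        rw [hDapp, hconst x hx0 hx, sub_self]
  -- Step F : N has codimension at most 2
  have hNrank : 2 * n - 2 ≤ finrank K N := by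
    by_contra hlt
    push_neg at hlt
    obtain ⟨C, hC⟩ := Submodule.exists_isCompl N
    have hsum : finrank K N + finrank K C = 2 * n := by
      rw [finrank_add_eq_of_isCompl hC, finrank_Vs]
    have hC3 : 3 ≤ finrank K C := by omega
    obtain ⟨x, hxm, y, hym, hxy, _, hx0, hyspan⟩ := ortho_pair_in hC3
    obtain ⟨w, hw0, hwm, hwperp⟩ := hpl x y hxy hx0 hyspan
    have hwC : w ∈ C := by
      have hle : span K {x, y} ≤ C := by
        rw [Submodule.span_le]
        intro t ht
        rcases Set.mem_insert_iff.mp ht with rfl | ht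
        · exact hxm
        · rw [Set.mem_singleton_iff.mp ht]; exact hym
      exact hle hwm
    have hwN : w ∈ N := (hNmem w).mpr (hwperp w hwm)
    have : w ∈ N ⊓ C := ⟨hwN, hwC⟩
    rw [hC.inf_eq_bot] at this
    exact hw0 (Submodule.mem_bot K |>.mp this)
  -- Step G : the multiplier is c²
  have hgyN : ∀ y ∈ N, g y = c • y := by
    intro y hy
    have hy' : Dm y = 0 := hy
    rw [hDapp] at hy'
    exact sub_eq_zero.mp hy'
  have hcc : lam = c * c := by
    by_contra hne
    have hti : ∀ x ∈ N, ∀ y ∈ N, sform x y = 0 := by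
      intro x hx y hy
      have hsim := hg.sim x y
      rw [hσ, hgyN x hx, hgyN y hy, sform_smul_left, sform_smul_right, ← mul_assoc] at hsim
      by_contra hs0
      exact hne (mul_right_cancel₀ hs0 hsim).symm
    exact tot_iso_bound hn N hti hNrank
  -- Step H : the difference map has rank at most one
  have halpha : ∀ x, Dm x ≠ 0 → ∀ z, sform x z = 0 → ∃ a : K, Dm z = a • Dm x := by
    intro x hDx z hz
    by_cases hsz : ∃ a : K, z = a • x
    · obtain ⟨a, rfl⟩ := hsz; exact ⟨a, by rw [map_smul]⟩
    · push_neg at hsz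
      have hx0 : x ≠ 0 := by rintro rfl; exact hDx (map_zero Dm)
      obtain ⟨w, hw0, hwm, hwperp⟩ := hpl x z hz hx0 hsz
      have hwN : w ∈ N := (hNmem w).mpr (hwperp w hwm)
      obtain ⟨s, t, rfl⟩ := Submodule.mem_span_pair.mp hwm
      have hD0 : s • Dm x + t • Dm z = 0 := by
        have h0 : Dm (s • x + t • z) = 0 := hwN
        rwa [map_add, map_smul, map_smul] at h0
      by_cases ht : t = 0
      · exfalso
        rw [ht, zero_smul, add_zero] at hD0
        have hs : s ≠ 0 := fun h0 => hw0 (by rw [h0, ht, zero_smul, zero_smul, add_zero])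
        rcases smul_eq_zero.mp hD0 with h' | h'
        · exact hs h'
        · exact hDx h'
      · refine ⟨-(t⁻¹ * s), ?_⟩
        have h1 : t • Dm z = -(s • Dm x) := by
          rw [eq_neg_iff_add_eq_zero, add_comm]
          exact hD0
        calc Dm z = t⁻¹ • (t • Dm z) := by rw [smul_smul, inv_mul_cancel₀ ht, one_smul]
        _ = -(t⁻¹ * s) • Dm x := by rw [h1, smul_neg, smul_smul, neg_smul]
  have hDne : ∃ x, Dm x ≠ 0 := by
    by_contra hD0
    push_neg at hD0
    obtain ⟨x, hx⟩ := H1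
    apply hx
    have h0 := hD0 x
    rw [hDapp] at h0
    rw [sub_eq_zero.mp h0, sform_smul_right, sform_self, mul_zero]
  obtain ⟨x₀, hx₀⟩ := hDne
  have hrank1 : ∀ y, ∃ a : K, Dm y = a • Dm x₀ := by
    intro y
    by_contra hno
    push_neg at hno
    have hDy0 : Dm y ≠ 0 := fun h => hno 0 (by rw [h, zero_smul])
    have hsxy : sform x₀ y ≠ 0 := by
      intro h0
      obtain ⟨a, ha⟩ := halpha x₀ hx₀ y h0
      exact hno a ha
    have hKN : ∀ z, sform z x₀ = 0 → sform z y = 0 → z ∈ N := by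
      intro z hzx hzy
      obtain ⟨a, ha⟩ := halpha x₀ hx₀ z (by rw [sform_skew, hzx, neg_zero])
      obtain ⟨b, hb⟩ := halpha y hDy0 z (by rw [sform_skew, hzy, neg_zero])
      have ha0 : a = 0 := by
        by_contra ha0
        by_cases hb0 : b = 0
        · rw [hb0, zero_smul] at hb
          rw [hb] at ha
          exact hx₀ (by
            have : Dm x₀ = a⁻¹ • (0 : Vs K n) := by
              rw [← ha.symm]
              rw [smul_smul, inv_mul_cancel₀ ha0, one_smul]
            rw [this, smul_zero])
        · apply hno (a / b)
          have : a • Dm x₀ = b • Dm y := by rw [← ha, ← hb]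
          calc Dm y = b⁻¹ • (b • Dm y) := by rw [smul_smul, inv_mul_cancel₀ hb0, one_smul]
          _ = b⁻¹ • (a • Dm x₀) := by rw [this]
          _ = (a / b) • Dm x₀ := by rw [smul_smul, div_eq_mul_inv, mul_comm]
      show Dm z = 0
      rw [ha, ha0, zero_smul]
    have hy0 : y ≠ 0 := fun h => hDy0 (by rw [h, map_zero])
    have hx₀0 : x₀ ≠ 0 := fun h => hx₀ (by rw [h, map_zero])
    have hNle : ∀ w ∈ N, sform w x₀ = 0 ∧ sform w y = 0 := by
      have hK0le : (LinearMap.ker (F x₀) ⊓ LinearMap.ker (F y) : Submodule K (Vs K n)) ≤ N := by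
        intro z hz
        rcases Submodule.mem_inf.mp hz with ⟨h1, h2⟩
        exact hKN z (by simpa using h1) (by simpa using h2)
      have hNsmall : finrank K N ≤ 2 * n - 2 := by
        have hsp : finrank K (span K {Dm x₀, Dm y}) = 2 := finrank_span_pair hx₀ hno
        have hsple : span K {Dm x₀, Dm y} ≤ LinearMap.range Dm := by
          rw [Submodule.span_le]
          intro t ht
          rcases Set.mem_insert_iff.mp ht with rfl | ht
          · exact ⟨x₀, rfl⟩
          · rw [Set.mem_singleton_iff.mp ht]; exact ⟨y, rfl⟩
        have h2le : 2 ≤ finrank K (LinearMap.range Dm) := by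
          rw [← hsp]; exact Submodule.finrank_mono hsple
        have hrn := LinearMap.finrank_range_add_finrank_ker Dm
        rw [finrank_Vs] at hrn
        rw [← hN] at hrn
        omega
      have heq := Submodule.eq_of_le_of_finrank_le hK0le (le_trans hNsmall (hdp x₀ y))
      intro w hw
      rw [← heq] at hw
      rcases Submodule.mem_inf.mp hw with ⟨h1, h2⟩
      exact ⟨by simpa using h1, by simpa using h2⟩
    have hyx₀span : ∀ a : K, y ≠ a • x₀ := by
      intro a h
      apply hno a
      rw [h, map_smul]
    -- build u with sform u x₀ = 1, sform u y = 0, y ∉ span {x₀, u}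
    have hu' : ∃ u', sform u' y = 0 ∧ sform u' x₀ ≠ 0 := by
      by_contra hcon
      push_neg at hcon
      obtain ⟨a, ha⟩ := perp_span_single y x₀ hcon
      have ha0 : a ≠ 0 := by
        rintro rfl
        rw [zero_smul] at ha
        exact hx₀0 ha
      apply hno a⁻¹
      rw [ha, map_smul, smul_smul, inv_mul_cancel₀ ha0, one_smul]
    obtain ⟨u', hu'y, hu'x⟩ := hu'
    set u0 := (sform u' x₀)⁻¹ • u' with hu0
    have hu0x : sform u0 x₀ = 1 := by
      rw [hu0, sform_smul_left, inv_mul_cancel₀ hu'x]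
    have hu0y : sform u0 y = 0 := by rw [hu0, sform_smul_left, hu'y, mul_zero]
    have hw1 : ∃ w1 ∈ N, ∀ a b : K, y ≠ a • x₀ + b • (u0 + w1) := by
      by_contra hcon
      push_neg at hcon
      have hsub : ∀ w1 ∈ N, w1 + u0 ∈ span K {x₀, y} := by
        intro w1 hw1m
        obtain ⟨a, b, hab⟩ := hcon w1 hw1m
        have hb : b ≠ 0 := by
          rintro rfl
          rw [zero_smul, add_zero] at hab
          exact hyx₀span a hab
        have hrep : w1 + u0 = b⁻¹ • y + (-(b⁻¹ * a)) • x₀ := by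
          have h1 : b • (u0 + w1) = y - a • x₀ := by
            rw [hab]; abel
          have h2 : u0 + w1 = b⁻¹ • (y - a • x₀) := by
            rw [← h1, smul_smul, inv_mul_cancel₀ hb, one_smul]
          rw [add_comm w1 u0, h2, smul_sub, smul_smul, neg_smul, ← sub_eq_add_neg]
        rw [hrep]
        exact add_mem (smul_mem _ _ (subset_span (by simp)))
          (smul_mem _ _ (subset_span (by simp)))
      have hNle2 : N ≤ span K {x₀, y} := by
        intro w1 hw1m
        have h1 := hsub w1 hw1m
        have h2 := hsub 0 (zero_mem N)
        have h3 := sub_mem h1 h2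
        simpa using h3
      have h4 := Submodule.finrank_mono hNle2
      have hsp2 : finrank K (span K {x₀, y}) = 2 := finrank_span_pair hx₀0 hyx₀span
      omega
    obtain ⟨w1, hw1N, hw1y⟩ := hw1
    obtain ⟨hw1x₀, hw1yy⟩ := hNle w1 hw1N
    have hux : sform (u0 + w1) x₀ = 1 := by rw [sform_add_left, hu0x, hw1x₀, add_zero]
    have huy : sform (u0 + w1) y = 0 := by rw [sform_add_left, hu0y, hw1yy, add_zero]
    have hv' : ∃ v', sform v' x₀ = 0 ∧ sform v' (u0 + w1) = 0 ∧ sform v' y ≠ 0 := by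
      by_contra hcon
      push_neg at hcon
      obtain ⟨a, b, hab⟩ := perp_span_pair x₀ (u0 + w1) y
        (fun v hv1 hv2 => hcon v hv1 hv2)
      exact hw1y a b hab
    obtain ⟨v', hv'x, hv'u, hv'y⟩ := hv'
    set v := (sform v' y)⁻¹ • v' with hvdef
    have hvx : sform v x₀ = 0 := by rw [hvdef, sform_smul_left, hv'x, mul_zero]
    have hvu : sform v (u0 + w1) = 0 := by rw [hvdef, sform_smul_left, hv'u, mul_zero]
    have hvy : sform v y = 1 := by rw [hvdef, sform_smul_left, inv_mul_cancel₀ hv'y]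
    have hu0' : (u0 + w1) ≠ 0 := by
      intro h
      rw [h, sform_zero_left] at hux
      exact one_ne_zero hux.symm
    have hvspan : ∀ a : K, v ≠ a • (u0 + w1) := by
      intro a h
      rw [h, sform_smul_left, huy, mul_zero] at hvy
      exact one_ne_zero hvy.symm
    have huv : sform (u0 + w1) v = 0 := by rw [sform_skew, hvu, neg_zero]
    obtain ⟨w, hw0, hwm, hwperp⟩ := hpl (u0 + w1) v huv hu0' hvspan
    have hwN : w ∈ N := (hNmem w).mpr (hwperp w hwm)
    obtain ⟨hwx₀, hwy⟩ := hNle w hwN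
    obtain ⟨s, t, rfl⟩ := Submodule.mem_span_pair.mp hwm
    rw [sform_add_left, sform_smul_left, sform_smul_left, hux, hvx] at hwx₀
    rw [sform_add_left, sform_smul_left, sform_smul_left, huy, hvy] at hwy
    have hs : s = 0 := by
      rw [mul_one, mul_zero, add_zero] at hwx₀
      exact hwx₀
    have ht : t = 0 := by
      rw [mul_zero, mul_one, zero_add] at hwy
      exact hwy
    exact hw0 (by rw [hs, ht, zero_smul, zero_smul, add_zero])
  -- Step I : conclusion
  have hp0 : Dm x₀ ≠ 0 := hx₀
  obtain ⟨w0, hw0p⟩ := exists_sform_ne_left hp0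
  set φ : Vs K n → K := fun ya => sform w0 (Dm ya) / sform w0 (Dm x₀) with hφdef
  have hφ : ∀ ya, Dm ya = φ ya • Dm x₀ := by
    intro ya
    obtain ⟨a, ha⟩ := hrank1 ya
    have hav : φ ya = a := by
      rw [hφdef]
      simp only
      rw [ha, sform_smul_right, mul_div_assoc, div_self hw0p, mul_one]
    rw [hav, ha]
  have hgx : ∀ x, g x = c • x + φ x • Dm x₀ := by
    intro x
    have h1 := hφ x
    rw [hDapp] at h1
    rw [← h1]
    abel
  have hkey : ∀ x ya, φ ya * sform x (Dm x₀) = φ x * sform ya (Dm x₀) := by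
    intro x ya
    have expand : sform (g x) (g ya) = c * c * sform x ya
        + c * (φ ya * sform x (Dm x₀)) - c * (φ x * sform ya (Dm x₀)) := by
      rw [hgx x, hgx ya]
      simp only [sform_add_left, sform_add_right, sform_smul_left, sform_smul_right, sform_self]
      rw [sform_skew (Dm x₀) ya]
      ring
    have hsim := hg.sim x ya
    rw [hσ, hcc] at hsim
    have h0 : c * (φ ya * sform x (Dm x₀) - φ x * sform ya (Dm x₀)) = 0 := by
      linear_combination hsim - expand
    rcases mul_eq_zero.mp h0 with h' | h'
    · exact absurd h' hc0
    · exact sub_eq_zero.mp h'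
  set a1 := φ w0 / sform w0 (Dm x₀) with ha1def
  have hφx : ∀ x, φ x = a1 * sform x (Dm x₀) := by
    intro x
    have h1 := hkey w0 x
    rw [ha1def, div_mul_eq_mul_div, ← h1, mul_div_assoc, div_self hw0p, mul_one]
  have ha10 : a1 ≠ 0 := by
    intro h
    apply hx₀
    rw [hφ x₀, hφx x₀, h, zero_mul, zero_smul]
  refine ⟨Dm x₀, hp0, a1 * c⁻¹, mul_ne_zero ha10 (inv_ne_zero hc0), ?_⟩
  intro v hv
  have hgv : g v = c • transvection (Dm x₀) (a1 * c⁻¹) v := by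
    have hco : c * (a1 * c⁻¹ * sform v (Dm x₀)) = a1 * sform v (Dm x₀) := by
      field_simp
    rw [transvection, smul_add, smul_smul, hco, hgx v, hφx v]
  rw [hgv]
  exact Submodule.span_singleton_smul_eq (isUnit_iff_ne_zero.mpr hc0) _

end Aux

namespace Aux
open Aux2

variable {K : Type} [Field K] {n : ℕ}

lemma backward (σ : K ≃+* K) (lam : K) (g : Vs K n → Vs K n)
    (hg : IsSymplecticCollineation σ lam g)
    {p : Vs K n} (hp : p ≠ 0) {a : K} (ha : a ≠ 0)
    (hspan : ∀ v : Vs K n, v ≠ 0 → span K {g v} = span K {transvection p a v}) :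
    (∃ x : Vs K n, sform x (g x) ≠ 0) ∧
      ∀ U : Submodule K (Vs K n), TotIso U → 2 ≤ finrank K U → ¬ MapsToOpp g U := by
  have hc : ∀ v : Vs K n, v ≠ 0 → ∃ cv : K, cv ≠ 0 ∧ g v = cv • transvection p a v := by
    intro v hv
    have h1 : g v ∈ span K {transvection p a v} := by
      rw [← hspan v hv]
      exact Submodule.mem_span_singleton_self _
    obtain ⟨cv, hcv⟩ := Submodule.mem_span_singleton.mp h1
    refine ⟨cv, ?_, hcv.symm⟩
    intro h0
    rw [h0, zero_smul] at hcv
    exact g_ne σ lam g hg hv hcv.symm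
  constructor
  · obtain ⟨x, hx⟩ := exists_sform_ne_left hp
    have hx0 : x ≠ 0 := by
      intro h
      rw [h, sform_zero_left] at hx
      exact hx rfl
    obtain ⟨cx, hcx0, hcx⟩ := hc x hx0
    refine ⟨x, ?_⟩
    rw [hcx, sform_smul_right, transvection, sform_add_right, sform_smul_right,
      sform_self, zero_add]
    intro h0
    rcases mul_eq_zero.mp h0 with h' | h'
    · exact hcx0 h'
    · rcases mul_eq_zero.mp h' with h'' | h''
      · rcases mul_eq_zero.mp h'' with h3 | h3
        · exact ha h3
        · exact hx h3
      · exact hx h''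
  · intro U hti hfr hopp
    have h1 : 1 ≤ finrank K (U ⊓ LinearMap.ker (F p) : Submodule K (Vs K n)) := by
      have := finrank_inf_ker U (F p)
      omega
    obtain ⟨v, hvm, hv0⟩ := finrank_pos_aux h1
    rcases Submodule.mem_inf.mp hvm with ⟨hvU, hvk⟩
    have hvp : sform v p = 0 := by simpa using hvk
    apply hv0
    apply hopp v hvU
    intro u hu
    by_cases hu0 : u = 0
    · rw [hu0, g_zero σ lam g hg, sform_zero_right]
    · obtain ⟨cu, hcu0, hcu⟩ := hc u hu0
      rw [hcu, sform_smul_right, transvection, sform_add_right, sform_smul_right,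
        hti v hvU u hu, hvp, mul_zero, add_zero, mul_zero]

end Aux


theorem symplectic_diagram_Cn1_iff_central_elation
    {K : Type} [Field K] {n : ℕ} (hn : 3 ≤ n)
    (σ : K ≃+* K) (lam : K) (g : Vs K n → Vs K n)
    (hg : IsSymplecticCollineation σ lam g) :
    ((∃ x : Vs K n, sform x (g x) ≠ 0) ∧
      ∀ U : Submodule K (Vs K n), TotIso U → 2 ≤ finrank K U → ¬ MapsToOpp g U) ↔
    (∃ p : Vs K n, p ≠ 0 ∧ ∃ a : K, a ≠ 0 ∧
      ∀ v : Vs K n, v ≠ 0 →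
        span K {g v} = span K {transvection p a v}) := by
  constructor
  · rintro ⟨H1, H2⟩
    exact Aux.forward hn σ lam g hg H1 H2
  · rintro ⟨p, hp, a, ha, hspan⟩
    exact Aux.backward σ lam g hg hp ha hspan
end
end
end

section
/- Let K be a field with char K ≠ 2, n ≥ 2, and 1 ≤ i with 2i ≤ n. Let θ be a collineation of the symplectic polar space C_{n,1}(K) induced by a semilinear similitude g such that: θ is point-domestic; θ maps some totally isotropic 2i-dimensional subspace to an opposite; θ maps no totally isotropic subspace of dimension > 2i to an opposite (θ has opposition diagram C_{n;i}^2); and, in case n = 2i, θ fixes at least one point (gv ∈ ⟨v⟩ for some v ≠ 0). Then θ is an (I_{2n−2i}, −I_{2i})-homology: θ is induced by a linear involution h of K^{2n} whose +1-eigenspace has dimension 2n−2i and whose −1-eigenspace has dimension 2i. -/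
/-!
STATEMENT 3: Let char K ≠ 2, n ≥ 2, 1 ≤ i, 2i ≤ n. A point-domestic collineation θ of
C_{n,1}(K) with opposition diagram C_{n;i}^2 (some totally isotropic 2i-space mapped to an
opposite, no totally isotropic subspace of dimension > 2i mapped to an opposite), fixing a
point if n = 2i, is an (I_{2n−2i}, −I_{2i})-homology: θ is induced by a linear involution
whose +1-eigenspace has dimension 2n−2i and whose −1-eigenspace has dimension 2i.
-/

open Module Submodule

noncomputable section

variable {K : Type} [Field K] {n : ℕ}

lemma sform_add_left (x x' y : Vs K n) : sform (x + x') y = sform x y + sform x' y := by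
  simp only [sform, ← Finset.sum_add_distrib]
  exact Finset.sum_congr rfl fun j _ => by simp [Prod.fst_add, Prod.snd_add]; ring

lemma sform_add_right (x y y' : Vs K n) : sform x (y + y') = sform x y + sform x y' := by
  simp only [sform, ← Finset.sum_add_distrib]
  exact Finset.sum_congr rfl fun j _ => by simp [Prod.fst_add, Prod.snd_add]; ring

lemma sform_smul_left (a : K) (x y : Vs K n) : sform (a • x) y = a * sform x y := by
  simp only [sform, Finset.mul_sum]
  exact Finset.sum_congr rfl fun j _ => by simp [Prod.smul_fst, Prod.smul_snd]; ring

lemma sform_smul_right (a : K) (x y : Vs K n) : sform x (a • y) = a * sform x y := by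
  simp only [sform, Finset.mul_sum]
  exact Finset.sum_congr rfl fun j _ => by simp [Prod.smul_fst, Prod.smul_snd]; ring

lemma sform_self (x : Vs K n) : sform x x = 0 := by
  simp [sform, mul_comm]

lemma sform_anti (x y : Vs K n) : sform x y = - sform y x := by
  simp only [sform, ← Finset.sum_neg_distrib]
  exact Finset.sum_congr rfl fun j _ => by ring

lemma sform_nondeg (x : Vs K n) (h : ∀ y, sform x y = 0) : x = 0 := by
  have h1 : ∀ j, x.1 j = 0 := by
    intro j
    have := h (0, Pi.single j 1)
    simpa [sform, Pi.single_apply, mul_ite, Finset.sum_ite_eq'] using this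
  have h2 : ∀ j, x.2 j = 0 := by
    intro j
    have := h (Pi.single j 1, 0)
    simpa [sform, Pi.single_apply, mul_ite, Finset.sum_ite_eq'] using this
  ext j
  · exact h1 j
  · exact h2 j

lemma sform_sub_left (x x' y : Vs K n) : sform (x - x') y = sform x y - sform x' y := by
  have := sform_add_left (x - x') x' y
  simp only [sub_add_cancel] at this
  linear_combination -this

lemma sform_sub_right (x y y' : Vs K n) : sform x (y - y') = sform x y - sform x y' := by
  have := sform_add_right x (y - y') y'
  simp only [sub_add_cancel] at this
  linear_combination -this

def Bf (K : Type) [Field K] (n : ℕ) : LinearMap.BilinForm K (Vs K n) :=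
  LinearMap.mk₂ K sform sform_add_left sform_smul_left sform_add_right sform_smul_right

@[simp] lemma Bf_apply (x y : Vs K n) : Bf K n x y = sform x y := rfl

lemma Bf_refl : (Bf K n).IsRefl := by
  intro x y h
  rw [Bf_apply] at *
  rw [sform_anti, h, neg_zero]

lemma Bf_nondeg : (Bf K n).Nondegenerate :=
  ⟨fun x h => sform_nondeg x h, fun y h => sform_nondeg y fun x => by
    have := h x; simp only [Bf_apply] at this; rw [sform_anti, this, neg_zero]⟩

lemma finrank_Vs : finrank K (Vs K n) = 2 * n := by
  simp [Vs, finrank_prod]; ring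

/-- Extension lemma: if `U` is totally isotropic mapped-to-opposite and `x, y` are
orthogonal to `U` and `gU`, with `sform x y = 0` and `sform x (g y) ≠ 0`, then
`U ⊔ span {x,y}` is a strictly larger totally isotropic subspace mapped to an opposite. -/
lemma ext_opp (g : Vs K n → Vs K n)
    (hpd : ∀ x : Vs K n, sform x (g x) = 0)
    (hanti : ∀ a b : Vs K n, sform a (g b) = - sform b (g a))
    (U : Submodule K (Vs K n)) (hUiso : TotIso U) (hUopp : MapsToOpp g U)
    (x y : Vs K n)
    (hxU : ∀ u ∈ U, sform x u = 0) (hxgU : ∀ u ∈ U, sform x (g u) = 0)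
    (hyU : ∀ u ∈ U, sform y u = 0) (hygU : ∀ u ∈ U, sform y (g u) = 0)
    (hxy : sform x y = 0) (hkey : sform x (g y) ≠ 0) :
    ∃ U' : Submodule K (Vs K n), TotIso U' ∧ MapsToOpp g U' ∧
      finrank K U < finrank K U' := by
  set U' : Submodule K (Vs K n) := U ⊔ span K {x, y} with hU'
  have hUle : U ≤ U' := le_sup_left
  have hxmem : x ∈ U' := Submodule.mem_sup_right (mem_span_pair.2 ⟨1, 0, by simp⟩)
  have hymem : y ∈ U' := Submodule.mem_sup_right (mem_span_pair.2 ⟨0, 1, by simp⟩)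
  have hxnotU : x ∉ U := by
    intro hx
    exact hkey (by rw [hanti x y]; rw [hygU x hx]; ring)
  -- generic form of elements of U'
  have hmem : ∀ w ∈ U', ∃ u ∈ U, ∃ a b : K, w = u + a • x + b • y := by
    intro w hw
    rcases mem_sup.1 hw with ⟨u, hu, p, hp, rfl⟩
    rcases mem_span_pair.1 hp with ⟨a, b, rfl⟩
    exact ⟨u, hu, a, b, by abel⟩
  refine ⟨U', ?_, ?_, ?_⟩
  · -- TotIso
    intro w hw w' hw'
    obtain ⟨u, hu, a, b, rfl⟩ := hmem w hw
    obtain ⟨u', hu', a', b', rfl⟩ := hmem w' hw'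
    have h1 : sform u x = 0 := by rw [sform_anti u x, hxU u hu]; ring
    have h2 : sform u y = 0 := by rw [sform_anti u y, hyU u hu]; ring
    have h3 : sform y x = 0 := by rw [sform_anti y x, hxy]; ring
    simp only [sform_add_left, sform_add_right, sform_smul_left, sform_smul_right,
      hUiso u hu u' hu', hxU u' hu', hyU u' hu', hxy, sform_self, h1, h2, h3]
    ring
  · -- MapsToOpp
    intro w hw hperp
    obtain ⟨u, hu, a, b, rfl⟩ := hmem w hw
    have hu0 : u = 0 := by
      apply hUopp u hu
      intro u' hu'
      have := hperp u' (hUle hu')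
      simp only [sform_add_left, sform_smul_left] at this
      rw [hxgU u' hu', hygU u' hu'] at this
      linear_combination this
    subst hu0
    have hyx : sform y (g x) = - sform x (g y) := by rw [hanti y x]
    have hb : b = 0 := by
      have := hperp x hxmem
      simp only [sform_add_left, sform_smul_left, zero_add] at this
      rw [hpd x, hyx] at this
      have : b * sform x (g y) = 0 := by linear_combination -this
      rcases mul_eq_zero.1 this with h | h
      · exact h
      · exact absurd h hkey
    have ha : a = 0 := by
      have := hperp y hymem
      simp only [sform_add_left, sform_smul_left, zero_add] at this
      rw [hpd y, hb] at this
      have : a * sform x (g y) = 0 := by linear_combination this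
      rcases mul_eq_zero.1 this with h | h
      · exact h
      · exact absurd h hkey
    simp [ha, hb]
  · -- rank
    exact Submodule.finrank_lt_finrank_of_lt (lt_of_le_of_ne hUle (fun h => hxnotU (h ▸ hxmem)))

set_option maxHeartbeats 2000000 in
theorem symplectic_Cni2_is_homology
    {K : Type} [Field K] {n i : ℕ}
    (hchar : (2 : K) ≠ 0) (hn : 2 ≤ n) (hi1 : 1 ≤ i) (hi2 : 2 * i ≤ n)
    (σ : K ≃+* K) (lam : K) (g : Vs K n → Vs K n)
    (hg : IsSymplecticCollineation σ lam g)
    -- θ is point-domestic: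
    (hpd : ∀ x : Vs K n, sform x (g x) = 0)
    -- some totally isotropic 2i-dimensional subspace is mapped to an opposite:
    (hopp : ∃ U : Submodule K (Vs K n), TotIso U ∧ finrank K U = 2 * i ∧ MapsToOpp g U)
    -- no totally isotropic subspace of dimension > 2i is mapped to an opposite:
    (hdom : ∀ U : Submodule K (Vs K n), TotIso U → 2 * i < finrank K U → ¬ MapsToOpp g U)
    -- if n = 2i then θ fixes at least one point:
    (hfix : n = 2 * i → ∃ v : Vs K n, v ≠ 0 ∧ ∃ c : K, g v = c • v) :
    ∃ h : Vs K n → Vs K n, IsLinearMap K h ∧ (∀ x, h (h x) = x) ∧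
      (∀ v : Vs K n, v ≠ 0 → span K {g v} = span K {h v}) ∧
      ∃ Wp Wm : Submodule K (Vs K n),
        (∀ x : Vs K n, x ∈ Wp ↔ h x = x) ∧
        (∀ x : Vs K n, x ∈ Wm ↔ h x = -x) ∧
        finrank K Wp = 2 * n - 2 * i ∧
        finrank K Wm = 2 * i := by
  obtain ⟨hbij, hadd, hsmul, hlamne, hsim⟩ := hg
  have hg0 : g 0 = 0 := by
    have h0 := hadd 0 0
    rw [add_zero] at h0
    have := add_left_cancel (a := g 0) (b := g 0) (c := 0) (by rw [add_zero, ← h0])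
    exact this
  -- polarization
  have polar : ∀ x y : Vs K n, sform x (g y) = - sform y (g x) := by
    intro x y
    have := hpd (x + y)
    rw [hadd, sform_add_left, sform_add_right, sform_add_right, hpd x, hpd y] at this
    linear_combination this
  -- sigma is the identity
  have hne : ∃ x y : Vs K n, sform x (g y) ≠ 0 := by
    by_contra hc
    push_neg at hc
    have hy0 : (⟨Pi.single ⟨0, by omega⟩ 1, 0⟩ : Vs K n) ≠ 0 := by
      intro h
      have := congrArg (fun z : Vs K n => z.1 ⟨0, by omega⟩) h
      simpa using this
    have : g (⟨Pi.single ⟨0, by omega⟩ 1, 0⟩ : Vs K n) = 0 := by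
      apply sform_nondeg
      intro z
      obtain ⟨w, rfl⟩ := hbij.2 z
      exact hc _ w
    exact hy0 (hbij.1 (by rw [this, hg0]))
  have hsigma : ∀ a : K, σ a = a := by
    obtain ⟨x, y, hxy⟩ := hne
    intro a
    have h1 : sform x (g (a • y)) = σ a * sform x (g y) := by
      rw [hsmul, sform_smul_right]
    have h2 : sform x (g (a • y)) = a * sform x (g y) := by
      rw [polar x (a • y), sform_smul_left, polar y x]
      ring
    have h3 : (σ a - a) * sform x (g y) = 0 := by rw [sub_mul, ← h1, h2]; ring
    rcases mul_eq_zero.1 h3 with h | h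
    · linear_combination h
    · exact absurd h hxy
  have hlin : IsLinearMap K g := ⟨hadd, fun a x => by rw [hsmul, hsigma]⟩
  have hsim' : ∀ x y, sform (g x) (g y) = lam * sform x y := by
    intro x y; rw [hsim, hsigma]
  have selfadj : ∀ x y : Vs K n, sform (g x) y = sform x (g y) := by
    intro x y
    rw [sform_anti (g x) y, polar x y]
  have hgg : ∀ x, g (g x) = lam • x := by
    intro x
    have : ∀ y, sform (g (g x) - lam • x) y = 0 := by
      intro y
      rw [sform_sub_left, sform_smul_left, selfadj (g x) y, ← hsim' x y]
      rw [selfadj x (g y)]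
      ring
    have h0 := sform_nondeg _ this
    rw [sub_eq_zero] at h0
    exact h0
  -- the fixed totally isotropic subspace mapped to an opposite
  obtain ⟨U₀, hU₀iso, hU₀rank, hU₀opp⟩ := hopp
  set Glin : Vs K n →ₗ[K] Vs K n := IsLinearMap.mk' g hlin with hGlin
  have hGapp : ∀ x, Glin x = g x := fun x => rfl
  set S : Submodule K (Vs K n) := U₀ ⊔ U₀.map Glin with hSdef
  have hSmem : ∀ s ∈ S, ∃ u ∈ U₀, ∃ u' ∈ U₀, s = u + g u' := by
    intro s hs
    rcases mem_sup.1 hs with ⟨u, hu, w, hw, rfl⟩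
    rcases mem_map.1 hw with ⟨u', hu', rfl⟩
    exact ⟨u, hu, u', hu', rfl⟩
  have hU₀S : U₀ ≤ S := le_sup_left
  have hgU₀S : ∀ u ∈ U₀, g u ∈ S := fun u hu =>
    Submodule.mem_sup_right (mem_map_of_mem hu)
  have hSg : ∀ s ∈ S, g s ∈ S := by
    intro s hs
    obtain ⟨u, hu, u', hu', rfl⟩ := hSmem s hs
    rw [hadd, hgg u']
    exact add_mem (hgU₀S u hu) (hU₀S (smul_mem _ lam hu'))
  set T : Submodule K (Vs K n) := (Bf K n).orthogonal S with hTdef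
  have hTmem : ∀ z, z ∈ T ↔ ∀ s ∈ S, sform s z = 0 := by
    intro z
    rw [hTdef, LinearMap.BilinForm.mem_orthogonal_iff]
    exact Iff.rfl
  have hTmem' : ∀ z ∈ T, ∀ s ∈ S, sform z s = 0 := fun z hz s hs => by
    rw [sform_anti, (hTmem z).1 hz s hs]; ring
  have hdisjST : Disjoint S T := by
    rw [disjoint_def]
    intro z hzS hzT
    obtain ⟨u, hu, u', hu', rfl⟩ := hSmem z hzS
    have hu'0 : u' = 0 := by
      apply hU₀opp u' hu'
      intro v hv
      have h1 : sform (u + g u') v = 0 := hTmem' _ hzT v (hU₀S hv)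
      rw [sform_add_left, hU₀iso u hu v hv, selfadj u' v] at h1
      linear_combination h1
    have hz : u + g u' = u := by rw [hu'0, hg0, add_zero]
    rw [hz] at hzT ⊢
    apply hU₀opp u hu
    intro v hv
    exact hTmem' u hzT (g v) (hgU₀S v hv)
  have hcompl : IsCompl S T :=
    ((Bf K n).isCompl_orthogonal_iff_disjoint Bf_refl).2 hdisjST
  have hTnondeg : ∀ z ∈ T, (∀ t ∈ T, sform z t = 0) → z = 0 := by
    intro z hz h0
    apply sform_nondeg
    intro y
    obtain ⟨s, t, hs, ht, rfl⟩ := Submodule.codisjoint_iff_exists_add_eq.mp hcompl.codisjoint y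
    rw [sform_add_right, hTmem' z hz s hs, h0 t ht, add_zero]
  have hTg : ∀ z ∈ T, g z ∈ T := by
    intro z hz
    rw [hTmem]
    intro s hs
    have h1 : sform (g z) s = sform z (g s) := selfadj z s
    rw [sform_anti s (g z), h1, hTmem' z hz (g s) (hSg s hs)]
    ring
  have hrankS : finrank K S ≤ 4 * i := by
    have h1 := Submodule.finrank_sup_add_finrank_inf_eq U₀ (U₀.map Glin)
    have h2 : finrank K (U₀.map Glin) ≤ 2 * i :=
      hU₀rank ▸ Submodule.finrank_map_le Glin U₀
    have h3 : finrank K ↥(U₀ ⊔ U₀.map Glin) ≤ finrank K U₀ + finrank K (U₀.map Glin) := by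
      omega
    rw [hSdef]
    omega
  have hrankST : finrank K S + finrank K T = 2 * n := by
    rw [Submodule.finrank_add_eq_of_isCompl hcompl, finrank_Vs]
  -- lam is a square
  have hsq : ∃ c : K, c * c = lam := by
    by_cases hni : n = 2 * i
    · obtain ⟨v, hv0, c, hvc⟩ := hfix hni
      refine ⟨c, ?_⟩
      have h1 : g (g v) = (c * c) • v := by
        rw [hvc, hlin.map_smul, hvc, smul_smul]
      rw [hgg v] at h1
      have h2 : (lam - c * c) • v = 0 := by rw [sub_smul, h1, sub_self]
      rcases smul_eq_zero.1 h2 with h | h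
      · linear_combination -h
      · exact absurd h hv0
    · by_contra hnsq
      push_neg at hnsq
      have h2i : 2 * i < n := lt_of_le_of_ne hi2 (fun h => hni h.symm)
      have hTne : T ≠ ⊥ := by
        intro hbot
        rw [hbot, finrank_bot] at hrankST
        omega
      obtain ⟨x, hxT, hx0⟩ := Submodule.exists_mem_ne_zero_of_ne_bot hTne
      by_cases hy : ∃ y ∈ T, sform x y = 0 ∧ sform x (g y) ≠ 0
      · obtain ⟨y, hyT, hxy, hkey⟩ := hy
        obtain ⟨U', hU'iso, hU'opp, hU'rank⟩ := ext_opp g hpd polar U₀ hU₀iso hU₀opp x y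
          (fun u hu => hTmem' x hxT u (hU₀S hu))
          (fun u hu => hTmem' x hxT (g u) (hgU₀S u hu))
          (fun u hu => hTmem' y hyT u (hU₀S hu))
          (fun u hu => hTmem' y hyT (g u) (hgU₀S u hu))
          hxy hkey
        exact hdom U' hU'iso (by omega) hU'opp
      · push_neg at hy
        have hxz : ∃ t ∈ T, sform x t ≠ 0 := by
          by_contra hc
          push_neg at hc
          exact hx0 (hTnondeg x hxT hc)
        obtain ⟨t, htT, ht0⟩ := hxz
        set z : Vs K n := (sform x t)⁻¹ • t with hzdef
        have hzT : z ∈ T := smul_mem T _ htT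
        have hxz1 : sform x z = 1 := by
          rw [hzdef, sform_smul_right, inv_mul_cancel₀ ht0]
        set μ := sform x (g z) with hμdef
        have hmu : ∀ y ∈ T, sform x (g y) = μ * sform x y := by
          intro y hyT
          have hyz : y - sform x y • z ∈ T := sub_mem hyT (smul_mem T _ hzT)
          have h0 : sform x (y - sform x y • z) = 0 := by
            rw [sform_sub_right, sform_smul_right, hxz1]; ring
          have hv0 := hy _ hyz h0
          have e : g (y - sform x y • z) = g y - sform x y • g z := by
            rw [← hGapp, ← hGapp, ← hGapp, map_sub, map_smul]
          rw [e, sform_sub_right, sform_smul_right] at hv0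
          linear_combination hv0
        have hgx : g x = μ • x := by
          have hmemT : g x - μ • x ∈ T := sub_mem (hTg x hxT) (smul_mem T μ hxT)
          have h0 : ∀ t' ∈ T, sform (g x - μ • x) t' = 0 := by
            intro t' ht'
            rw [sform_sub_left, sform_smul_left, selfadj x t', hmu t' ht']
            ring
          have := hTnondeg _ hmemT h0
          rwa [sub_eq_zero] at this
        have h2 : (lam - μ * μ) • x = 0 := by
          have h1 : g (g x) = (μ * μ) • x := by
            rw [hgx, hlin.map_smul, hgx, smul_smul]
          rw [hgg x] at h1
          rw [sub_smul, h1, sub_self]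
        rcases smul_eq_zero.1 h2 with h | h
        · exact hnsq μ (by linear_combination -h)
        · exact absurd h hx0
  -- the homology
  obtain ⟨c, hc2⟩ := hsq
  have hcne : c ≠ 0 := by
    intro h0
    rw [h0, mul_zero] at hc2
    exact hlamne hc2.symm
  set h : Vs K n → Vs K n := fun x => c⁻¹ • g x with hhdef
  have hhlin : IsLinearMap K h :=
    ⟨fun a b => by show c⁻¹ • g (a + b) = c⁻¹ • g a + c⁻¹ • g b; rw [hadd, smul_add],
     fun a x => by show c⁻¹ • g (a • x) = a • (c⁻¹ • g x); rw [hlin.map_smul, smul_comm]⟩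
  have hgh : ∀ x, g x = c • h x := by
    intro x
    show g x = c • (c⁻¹ • g x)
    rw [smul_smul, mul_inv_cancel₀ hcne, one_smul]
  have hh2 : ∀ x, h (h x) = x := by
    intro x
    show c⁻¹ • g (c⁻¹ • g x) = x
    rw [hlin.map_smul, hgg, smul_smul, smul_smul]
    rw [show c⁻¹ * c⁻¹ * lam = 1 by field_simp [← hc2]; linear_combination -hc2]
    rw [one_smul]
  have hsimh : ∀ x y, sform (h x) (h y) = sform x y := by
    intro x y
    show sform (c⁻¹ • g x) (c⁻¹ • g y) = sform x y
    rw [sform_smul_left, sform_smul_right, hsim' x y, ← hc2]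
    field_simp
  have hselfh : ∀ x y, sform (h x) y = sform x (h y) := by
    intro x y
    show sform (c⁻¹ • g x) y = sform x (c⁻¹ • g y)
    rw [sform_smul_left, sform_smul_right, selfadj x y]
  set Hlin : Vs K n →ₗ[K] Vs K n := IsLinearMap.mk' h hhlin with hHlin
  set Wp : Submodule K (Vs K n) := LinearMap.ker (Hlin - LinearMap.id) with hWp
  set Wm : Submodule K (Vs K n) := LinearMap.ker (Hlin + LinearMap.id) with hWm
  have memWp : ∀ x, x ∈ Wp ↔ h x = x := by
    intro x
    rw [hWp, LinearMap.mem_ker, LinearMap.sub_apply, LinearMap.id_apply, sub_eq_zero]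
    exact Iff.rfl
  have memWm : ∀ x, x ∈ Wm ↔ h x = -x := by
    intro x
    rw [hWm, LinearMap.mem_ker, LinearMap.add_apply, LinearMap.id_apply,
      add_eq_zero_iff_eq_neg]
    exact Iff.rfl
  have hcrossPM : ∀ a ∈ Wp, ∀ b ∈ Wm, sform a b = 0 := by
    intro a ha b hb
    have e := hsimh a b
    rw [(memWp a).1 ha, (memWm b).1 hb] at e
    rw [show -b = (-1 : K) • b by simp, sform_smul_right] at e
    have e2 : (2 : K) * sform a b = 0 := by linear_combination -e
    rcases mul_eq_zero.1 e2 with h0 | h0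
    · exact absurd h0 hchar
    · exact h0
  have hPM : IsCompl Wp Wm := by
    constructor
    · rw [disjoint_def]
      intro x hxp hxm
      have e1 := (memWp x).1 hxp
      have e2 := (memWm x).1 hxm
      have e3 : (2 : K) • x = 0 := by
        rw [two_smul]
        nth_rewrite 1 [← e1]
        rw [e2]
        abel
      rcases smul_eq_zero.1 e3 with h0 | h0
      · exact absurd h0 hchar
      · exact h0
    · rw [codisjoint_iff, eq_top_iff]
      intro x _
      have h2 : (2 : K)⁻¹ + (2 : K)⁻¹ = 1 := by
        rw [← two_mul, mul_inv_cancel₀ hchar]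
      have ha : ((2 : K)⁻¹ • (x + h x)) ∈ Wp := by
        rw [memWp, hhlin.map_smul, hhlin.map_add, hh2 x]
        rw [add_comm (h x) x]
      have hb : ((2 : K)⁻¹ • (x - h x)) ∈ Wm := by
        rw [memWm, hhlin.map_smul, hhlin.map_sub, hh2 x]
        rw [show h x - x = -(x - h x) by abel, smul_neg]
      apply mem_sup.2 ⟨_, ha, _, hb, ?_⟩
      rw [← smul_add, show x + h x + (x - h x) = (2 : K) • x by rw [two_smul]; abel,
        smul_smul, inv_mul_cancel₀ hchar, one_smul]
  have hrankPM : finrank K Wp + finrank K Wm = 2 * n := by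
    rw [Submodule.finrank_add_eq_of_isCompl hPM, finrank_Vs]
  have hdisjUWp : U₀ ⊓ Wp = ⊥ := by
    rw [eq_bot_iff]
    rintro u ⟨hu, hup⟩
    rw [Submodule.mem_bot]
    apply hU₀opp u hu
    intro u' hu'
    rw [hgh u', sform_smul_right, ← hselfh u u', (memWp u).1 hup, hU₀iso u hu u' hu',
      mul_zero]
  have hdisjUWm : U₀ ⊓ Wm = ⊥ := by
    rw [eq_bot_iff]
    rintro u ⟨hu, hum⟩
    rw [Submodule.mem_bot]
    apply hU₀opp u hu
    intro u' hu'
    rw [hgh u', sform_smul_right, ← hselfh u u', (memWm u).1 hum,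
      show sform (-u) u' = - sform u u' by rw [show -u = (-1:K) • u by simp, sform_smul_left]; ring,
      hU₀iso u hu u' hu']
    ring
  have hrankWp_le : finrank K U₀ + finrank K Wp ≤ 2 * n := by
    have e := Submodule.finrank_sup_add_finrank_inf_eq U₀ Wp
    rw [hdisjUWp, finrank_bot, add_zero] at e
    rw [← e]
    have := Submodule.finrank_le (U₀ ⊔ Wp)
    rw [finrank_Vs] at this
    exact this
  have hrankWm_le : finrank K U₀ + finrank K Wm ≤ 2 * n := by
    have e := Submodule.finrank_sup_add_finrank_inf_eq U₀ Wm
    rw [hdisjUWm, finrank_bot, add_zero] at e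
    rw [← e]
    have := Submodule.finrank_le (U₀ ⊔ Wm)
    rw [finrank_Vs] at this
    exact this
  have hp2i : 2 * i ≤ finrank K Wp := by omega
  have hm2i : 2 * i ≤ finrank K Wm := by omega
  have hmin : finrank K Wp = 2 * i ∨ finrank K Wm = 2 * i := by
    by_contra hboth
    push_neg at hboth
    obtain ⟨hpne, hmne⟩ := hboth
    have hpgt : 2 * i < finrank K Wp := lt_of_le_of_ne hp2i (fun e => hpne e.symm)
    have hmgt : 2 * i < finrank K Wm := lt_of_le_of_ne hm2i (fun e => hmne e.symm)
    have hSh : ∀ s ∈ S, h s ∈ S := fun s hs => smul_mem S _ (hSg s hs)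
    have hTh : ∀ t ∈ T, h t ∈ T := fun t ht => smul_mem T _ (hTg t ht)
    have huniq : ∀ s ∈ S, ∀ t ∈ T, s + t = 0 → s = 0 ∧ t = 0 := by
      intro s hs t ht hst
      rw [add_eq_zero_iff_eq_neg] at hst
      have hsT : s ∈ T := by rw [hst]; exact neg_mem ht
      have h0 : s = 0 := disjoint_def.1 hdisjST s hs hsT
      refine ⟨h0, ?_⟩
      rw [h0] at hst
      exact neg_eq_zero.1 hst.symm
    have hsplitp : ∀ w, h w = w →
        ∃ s, s ∈ S ∧ h s = s ∧ ∃ t, t ∈ T ∧ h t = t ∧ w = s + t := by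
      intro w hw
      obtain ⟨s, t, hs, ht, hst⟩ := Submodule.codisjoint_iff_exists_add_eq.mp hcompl.codisjoint w
      have e1 : h s + h t = s + t := by
        rw [← hhlin.map_add, hst]
        exact hw
      have e : (h s - s) + (h t - t) = 0 := by
        rw [sub_add_sub_comm, e1, sub_self]
      obtain ⟨f1, f2⟩ := huniq _ (sub_mem (hSh s hs) hs) _ (sub_mem (hTh t ht) ht) e
      exact ⟨s, hs, by rwa [sub_eq_zero] at f1, t, ht, by rwa [sub_eq_zero] at f2, hst.symm⟩
    have hsplitT : ∀ t ∈ T, ∃ a, a ∈ Wp ⊓ T ∧ ∃ b, b ∈ Wm ⊓ T ∧ t = a + b := by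
      intro t ht
      refine ⟨(2:K)⁻¹ • (t + h t), ⟨(memWp _).2 ?_, smul_mem _ _ (add_mem ht (hTh t ht))⟩,
        (2:K)⁻¹ • (t - h t), ⟨(memWm _).2 ?_, smul_mem _ _ (sub_mem ht (hTh t ht))⟩, ?_⟩
      · rw [hhlin.map_smul, hhlin.map_add, hh2, add_comm (h t) t]
      · rw [hhlin.map_smul, hhlin.map_sub, hh2, show h t - t = -(t - h t) by abel, smul_neg]
      · rw [← smul_add, show t + h t + (t - h t) = (2:K) • t by rw [two_smul]; abel,
          smul_smul, inv_mul_cancel₀ hchar, one_smul]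
    have hsupS : (Wp ⊓ S) ⊔ (Wm ⊓ S) = S := by
      apply le_antisymm (sup_le inf_le_right inf_le_right)
      intro s hs
      have ha : (2:K)⁻¹ • (s + h s) ∈ Wp ⊓ S :=
        ⟨(memWp _).2 (by rw [hhlin.map_smul, hhlin.map_add, hh2, add_comm (h s) s]),
         smul_mem _ _ (add_mem hs (hSh s hs))⟩
      have hb : (2:K)⁻¹ • (s - h s) ∈ Wm ⊓ S :=
        ⟨(memWm _).2 (by rw [hhlin.map_smul, hhlin.map_sub, hh2,
            show h s - s = -(s - h s) by abel, smul_neg]),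
         smul_mem _ _ (sub_mem hs (hSh s hs))⟩
      apply mem_sup.2 ⟨_, ha, _, hb, ?_⟩
      rw [← smul_add, show s + h s + (s - h s) = (2:K) • s by rw [two_smul]; abel,
        smul_smul, inv_mul_cancel₀ hchar, one_smul]
    have hinfS : (Wp ⊓ S) ⊓ (Wm ⊓ S) = ⊥ := by
      rw [eq_bot_iff]
      rintro z ⟨⟨hzp, -⟩, ⟨hzm, -⟩⟩
      rw [Submodule.mem_bot]
      exact disjoint_def.1 hPM.disjoint z hzp hzm
    have hrankSsplit : finrank K ↥(Wp ⊓ S) + finrank K ↥(Wm ⊓ S) = finrank K S := by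
      have e := Submodule.finrank_sup_add_finrank_inf_eq (Wp ⊓ S) (Wm ⊓ S)
      rw [hsupS, hinfS, finrank_bot, add_zero] at e
      exact e.symm
    have hUWmS : 2 * i + finrank K ↥(Wm ⊓ S) ≤ finrank K S := by
      have e := Submodule.finrank_sup_add_finrank_inf_eq U₀ (Wm ⊓ S)
      have einf : U₀ ⊓ (Wm ⊓ S) = ⊥ := by
        rw [eq_bot_iff]
        rintro z ⟨hz1, hz2, -⟩
        rw [Submodule.mem_bot]
        have hz : z ∈ U₀ ⊓ Wm := ⟨hz1, hz2⟩
        rw [hdisjUWm] at hz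
        exact (Submodule.mem_bot _).1 hz
      rw [einf, finrank_bot, add_zero, hU₀rank] at e
      rw [← e]
      exact Submodule.finrank_mono (sup_le hU₀S inf_le_right)
    have hUWpS : 2 * i + finrank K ↥(Wp ⊓ S) ≤ finrank K S := by
      have e := Submodule.finrank_sup_add_finrank_inf_eq U₀ (Wp ⊓ S)
      have einf : U₀ ⊓ (Wp ⊓ S) = ⊥ := by
        rw [eq_bot_iff]
        rintro z ⟨hz1, hz2, -⟩
        rw [Submodule.mem_bot]
        have hz : z ∈ U₀ ⊓ Wp := ⟨hz1, hz2⟩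
        rw [hdisjUWp] at hz
        exact (Submodule.mem_bot _).1 hz
      rw [einf, finrank_bot, add_zero, hU₀rank] at e
      rw [← e]
      exact Submodule.finrank_mono (sup_le hU₀S inf_le_right)
    have hWpS2i : finrank K ↥(Wp ⊓ S) = 2 * i := by omega
    have hsupWpT : (Wp ⊓ S) ⊔ (Wp ⊓ T) = Wp := by
      apply le_antisymm (sup_le inf_le_left inf_le_left)
      intro w hw
      obtain ⟨s, hs, hhs, t, ht, hht, rfl⟩ := hsplitp w ((memWp w).1 hw)
      exact add_mem (Submodule.mem_sup_left ⟨(memWp s).2 hhs, hs⟩)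
        (Submodule.mem_sup_right ⟨(memWp t).2 hht, ht⟩)
    have hinfWpT : (Wp ⊓ S) ⊓ (Wp ⊓ T) = ⊥ := by
      rw [eq_bot_iff]
      rintro z ⟨⟨-, hzS⟩, ⟨-, hzT⟩⟩
      rw [Submodule.mem_bot]
      exact disjoint_def.1 hdisjST z hzS hzT
    have hrankWpT : finrank K ↥(Wp ⊓ S) + finrank K ↥(Wp ⊓ T) = finrank K Wp := by
      have e := Submodule.finrank_sup_add_finrank_inf_eq (Wp ⊓ S) (Wp ⊓ T)
      rw [hsupWpT, hinfWpT, finrank_bot, add_zero] at e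
      exact e.symm
    have hWpT_ne : Wp ⊓ T ≠ ⊥ := by
      intro e
      rw [e, finrank_bot] at hrankWpT
      omega
    -- the Wm ⊓ T part
    have hrankWmT : 1 ≤ finrank K ↥(Wm ⊓ T) := by
      by_contra hcon
      push_neg at hcon
      have h0 : finrank K ↥(Wm ⊓ T) = 0 := by omega
      have : finrank K ↥((Wm ⊓ S) ⊔ (Wm ⊓ T)) ≤ finrank K ↥(Wm ⊓ S) := by
        have e := Submodule.finrank_sup_add_finrank_inf_eq (Wm ⊓ S) (Wm ⊓ T)
        omega
      have hle : Wm ≤ (Wm ⊓ S) ⊔ (Wm ⊓ T) := by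
        intro w hw
        obtain ⟨s, t, hs, ht, hst⟩ :=
          Submodule.codisjoint_iff_exists_add_eq.mp hcompl.codisjoint w
        have e1 : h s + h t = -s + -t := by
          rw [← hhlin.map_add, hst, (memWm w).1 hw, ← hst]
          abel
        have e : (h s + s) + (h t + t) = 0 := by
          rw [show (h s + s) + (h t + t) = (h s + h t) + (s + t) by abel, e1]
          abel
        obtain ⟨f1, f2⟩ := huniq _ (add_mem (hSh s hs) hs) _ (add_mem (hTh t ht) ht) e
        rw [← hst]
        exact add_mem
          (Submodule.mem_sup_left ⟨(memWm s).2 (by rwa [add_eq_zero_iff_eq_neg] at f1), hs⟩)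
          (Submodule.mem_sup_right ⟨(memWm t).2 (by rwa [add_eq_zero_iff_eq_neg] at f2), ht⟩)
      have := le_trans (Submodule.finrank_mono hle) this
      omega
    have hWmT_ne : Wm ⊓ T ≠ ⊥ := by
      intro e
      rw [e, finrank_bot] at hrankWmT
      omega
    have hWpTnd : ∀ z ∈ Wp ⊓ T, (∀ t ∈ Wp ⊓ T, sform z t = 0) → z = 0 := by
      intro z hz h0
      apply hTnondeg z hz.2
      intro t ht
      obtain ⟨a, ha, b, hb, rfl⟩ := hsplitT t ht
      rw [sform_add_right, h0 a ha, hcrossPM z hz.1 b hb.1, add_zero]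
    have hWmTnd : ∀ z ∈ Wm ⊓ T, (∀ t ∈ Wm ⊓ T, sform z t = 0) → z = 0 := by
      intro z hz h0
      apply hTnondeg z hz.2
      intro t ht
      obtain ⟨a, ha, b, hb, rfl⟩ := hsplitT t ht
      have e : sform z a = 0 := by
        rw [sform_anti, hcrossPM a ha.1 z hz.1]
        ring
      rw [sform_add_right, e, h0 b hb, zero_add]
    have hpair : ∀ (W : Submodule K (Vs K n)), W ≠ ⊥ →
        (∀ z ∈ W, (∀ t ∈ W, sform z t = 0) → z = 0) →
        ∀ κ : K, ∃ e ∈ W, ∃ f ∈ W, sform e f = κ := by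
      intro W hne hnd κ
      obtain ⟨e, heW, he0⟩ := Submodule.exists_mem_ne_zero_of_ne_bot hne
      have hex : ∃ f₀ ∈ W, sform e f₀ ≠ 0 := by
        by_contra hcon
        push_neg at hcon
        exact he0 (hnd e heW hcon)
      obtain ⟨f₀, hf₀W, hf₀⟩ := hex
      exact ⟨e, heW, (κ * (sform e f₀)⁻¹) • f₀, smul_mem _ _ hf₀W,
        by rw [sform_smul_right, mul_assoc, inv_mul_cancel₀ hf₀, mul_one]⟩
    obtain ⟨e, he, f, hf, hef⟩ := hpair (Wp ⊓ T) hWpT_ne hWpTnd 1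
    obtain ⟨e', he', f', hf', hef'⟩ := hpair (Wm ⊓ T) hWmT_ne hWmTnd (-1)
    have hcr1 : sform e f' = 0 := hcrossPM e he.1 f' hf'.1
    have hcr2 : sform e' f = 0 := by
      rw [sform_anti, hcrossPM f hf.1 e' he'.1]
      ring
    have hxT : e + e' ∈ T := add_mem he.2 he'.2
    have hyT : f + f' ∈ T := add_mem hf.2 hf'.2
    have hxy : sform (e + e') (f + f') = 0 := by
      rw [sform_add_left, sform_add_right, sform_add_right, hef, hef', hcr1, hcr2]
      ring
    have hyh : h (f + f') = f - f' := by
      rw [hhlin.map_add, (memWp f).1 hf.1, (memWm f').1 hf'.1]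
      abel
    have hkey : sform (e + e') (g (f + f')) ≠ 0 := by
      rw [hgh, hyh, sform_smul_right, sform_add_left, sform_sub_right, sform_sub_right,
        hef, hef', hcr1, hcr2]
      intro hcon
      have h2 : c * 2 = 0 := by linear_combination hcon
      rcases mul_eq_zero.1 h2 with h0 | h0
      · exact hcne h0
      · exact hchar h0
    obtain ⟨U', hU'iso, hU'opp, hU'rank⟩ := ext_opp g hpd polar U₀ hU₀iso hU₀opp
      (e + e') (f + f')
      (fun u hu => hTmem' _ hxT u (hU₀S hu))
      (fun u hu => hTmem' _ hxT (g u) (hgU₀S u hu))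
      (fun u hu => hTmem' _ hyT u (hU₀S hu))
      (fun u hu => hTmem' _ hyT (g u) (hgU₀S u hu))
      hxy hkey
    exact hdom U' hU'iso (by omega) hU'opp
  rcases hmin with hp | hm
  · refine ⟨fun x => -(h x),
      ⟨fun a b => by show -(h (a + b)) = -(h a) + -(h b); rw [hhlin.map_add, neg_add],
       fun a x => by show -(h (a • x)) = a • -(h x); rw [hhlin.map_smul, smul_neg]⟩,
      ?_, ?_, Wm, Wp, ?_, ?_, ?_, ?_⟩
    · intro x
      show -(h (-(h x))) = x
      rw [hhlin.map_neg, neg_neg, hh2]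
    · intro v hv
      have e : g v = (-c) • (-(h v)) := by
        rw [smul_neg, neg_smul, neg_neg, ← hgh]
      rw [e]
      exact Submodule.span_singleton_smul_eq (IsUnit.mk0 (-c) (neg_ne_zero.2 hcne)) _
    · intro x
      show x ∈ Wm ↔ -(h x) = x
      rw [memWm x]
      constructor
      · intro e
        rw [e, neg_neg]
      · intro e
        exact neg_eq_iff_eq_neg.1 e
    · intro x
      show x ∈ Wp ↔ -(h x) = -x
      rw [memWp x]
      constructor
      · intro e
        rw [e]
      · intro e
        exact neg_injective e
    · omega
    · exact hp
  · exact ⟨h, hhlin, hh2,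
      fun v hv => by
        rw [hgh v]
        exact Submodule.span_singleton_smul_eq (IsUnit.mk0 c hcne) _,
      Wp, Wm, memWp, memWm, by omega, hm⟩
end
end

section
/- Let K be a field, n ≥ 2, and let θ be a point-domestic collineation of the symplectic polar space C_{n,1}(K) induced by a semilinear similitude g (so ω(x,gx) = 0 for all x ∈ K^{2n}). Then for every point p = ⟨x⟩ with p^θ ≠ p the line ⟨p, p^θ⟩ is fixed by θ; equivalently, g²x ∈ span{x, gx} for every x ∈ K^{2n}. -/
/-!
STATEMENT 4: If θ is a point-domestic collineation of C_{n,1}(K), n ≥ 2, induced by a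
semilinear similitude g, then for every point p = ⟨x⟩ with p^θ ≠ p the line ⟨p, p^θ⟩ is
fixed by θ; equivalently, g²x ∈ span{x, gx} for every x ∈ K^{2n}.
-/

open Module Submodule

noncomputable section

/-!
A point-domestic similitude `g` of a nondegenerate alternating form `B` is an involution up
to the scalar: polarising `B x (g x) = 0` gives `B x (g y) = -B y (g x)`, and combined with
the similitude law and surjectivity this yields `B y (g (g x)) = lam * σ (B y x)`. Comparing
this identity at `a • y` and at `y` forces `σ = id`, after which nondegeneracy gives
`g (g x) = lam • x`.
-/

namespace LinearMap.BilinForm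

variable {K V : Type*} [CommRing K] [AddCommGroup V] [Module K V]
  {B : LinearMap.BilinForm K V} {σ : K ≃+* K} {lam : K} {g : V →ₛₗ[(σ : K →+* K)] V}

theorem apply_map_eq_neg_apply_map (hpd : ∀ x, B x (g x) = 0) (x y : V) :
    B x (g y) = -B y (g x) := by
  have h := hpd (x + y)
  simp only [map_add, LinearMap.add_apply, hpd x, hpd y] at h
  linear_combination h

theorem apply_map_map (hB : B.IsAlt) (hsurj : Function.Surjective g)
    (hsim : ∀ x y, B (g x) (g y) = lam * σ (B x y)) (hpd : ∀ x, B x (g x) = 0) (x y : V) :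
    B y (g (g x)) = lam * σ (B y x) := by
  obtain ⟨z, rfl⟩ := hsurj y
  rw [hsim, apply_map_eq_neg_apply_map hpd, hB.neg_eq]

theorem ringEquiv_apply_eq_self [IsDomain K] (hB : B.IsAlt)
    (hsep : B.SeparatingRight) (hsurj : Function.Surjective g)
    (hsim : ∀ x y, B (g x) (g y) = lam * σ (B x y)) (hpd : ∀ x, B x (g x) = 0) (hlam : lam ≠ 0)
    {x : V} (hx : x ≠ 0) (a : K) : σ a = a := by
  obtain ⟨y, hy⟩ : ∃ y, B y x ≠ 0 := by
    by_contra! h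
    exact hx (hsep x h)
  have h := apply_map_map hB hsurj hsim hpd x (a • y)
  rw [LinearMap.map_smul₂, smul_eq_mul, apply_map_map hB hsurj hsim hpd,
    LinearMap.map_smul₂, smul_eq_mul, map_mul] at h
  have hne : lam * σ (B y x) ≠ 0 := mul_ne_zero hlam ((map_ne_zero_iff σ σ.injective).mpr hy)
  exact mul_right_cancel₀ hne (by linear_combination -h)

theorem map_map_eq_smul [IsDomain K] (hB : B.IsAlt)
    (hsep : B.SeparatingRight) (hsurj : Function.Surjective g)
    (hsim : ∀ x y, B (g x) (g y) = lam * σ (B x y)) (hpd : ∀ x, B x (g x) = 0) (hlam : lam ≠ 0)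
    (x : V) : g (g x) = lam • x := by
  rcases eq_or_ne x 0 with rfl | hx
  · simp
  have hσ := ringEquiv_apply_eq_self hB hsep hsurj hsim hpd hlam hx
  refine sub_eq_zero.mp (hsep _ fun y => ?_)
  rw [map_sub, LinearMap.map_smul, apply_map_map hB hsurj hsim hpd, hσ,
    smul_eq_mul, sub_self]

end LinearMap.BilinForm

section StandardSymplecticForm

variable {K : Type} [Field K] {n : ℕ}

def sformBilin : LinearMap.BilinForm K (Vs K n) :=
  LinearMap.mk₂ K sform
    (fun x x' y => by
      simp only [sform, Prod.fst_add, Prod.snd_add, Pi.add_apply, ← Finset.sum_add_distrib]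
      exact Finset.sum_congr rfl fun _ _ => by ring)
    (fun a x y => by
      simp only [sform, Prod.smul_fst, Prod.smul_snd, Pi.smul_apply, smul_eq_mul, Finset.mul_sum]
      exact Finset.sum_congr rfl fun _ _ => by ring)
    (fun x y y' => by
      simp only [sform, Prod.fst_add, Prod.snd_add, Pi.add_apply, ← Finset.sum_add_distrib]
      exact Finset.sum_congr rfl fun _ _ => by ring)
    (fun a x y => by
      simp only [sform, Prod.smul_fst, Prod.smul_snd, Pi.smul_apply, smul_eq_mul, Finset.mul_sum]
      exact Finset.sum_congr rfl fun _ _ => by ring)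

theorem sformBilin_isAlt : (sformBilin : LinearMap.BilinForm K (Vs K n)).IsAlt := fun x => by
  simp [sformBilin, sform, mul_comm]

theorem sformBilin_separatingRight :
    (sformBilin : LinearMap.BilinForm K (Vs K n)).SeparatingRight := by
  intro x h
  ext j
  · simpa [sformBilin, sform, Pi.single_apply] using h (0, Pi.single j 1)
  · simpa [sformBilin, sform, Pi.single_apply] using h (Pi.single j 1, 0)

def IsSymplecticCollineation.toSemilinearMap {σ : K ≃+* K} {lam : K} {g : Vs K n → Vs K n}
    (hg : IsSymplecticCollineation σ lam g) : Vs K n →ₛₗ[(σ : K →+* K)] Vs K n where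
  toFun := g
  map_add' := hg.map_add
  map_smul' := hg.map_smulc

end StandardSymplecticForm

theorem pointDomestic_fixes_joining_line_general
    {K : Type} [Field K] {n : ℕ}
    (σ : K ≃+* K) (lam : K) (g : Vs K n → Vs K n)
    (hg : IsSymplecticCollineation σ lam g)
    -- θ is point-domestic:
    (hpd : ∀ x : Vs K n, sform x (g x) = 0) :
    -- the line ⟨p, p^θ⟩ through any non-fixed point p = ⟨x⟩ is fixed by θ …
    (∀ x : Vs K n, x ≠ 0 → g x ∉ span K {x} →
      ∀ y ∈ span K {x, g x}, g y ∈ span K {x, g x}) ∧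
    -- … equivalently, g²x ∈ span{x, gx} for every x
    (∀ x : Vs K n, g (g x) ∈ span K {x, g x}) := by
  have hsq : ∀ x, g (g x) = lam • x :=
    LinearMap.BilinForm.map_map_eq_smul (g := hg.toSemilinearMap)
      sformBilin_isAlt sformBilin_separatingRight hg.bij.2 hg.sim hpd hg.lam_ne
  have hx : ∀ x : Vs K n, x ∈ span K {x, g x} := fun x => subset_span (by simp)
  have hgx : ∀ x : Vs K n, g x ∈ span K {x, g x} := fun x => subset_span (by simp)
  refine ⟨fun x _ _ y hy => ?_, fun x => hsq x ▸ smul_mem _ _ (hx x)⟩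
  obtain ⟨a, b, rfl⟩ := mem_span_pair.mp hy
  rw [hg.map_add, hg.map_smulc, hg.map_smulc, hsq]
  exact add_mem (smul_mem _ _ (hgx x)) (smul_mem _ _ (smul_mem _ _ (hx x)))

theorem pointDomestic_fixes_joining_line
    {K : Type} [Field K] {n : ℕ} (hn : 2 ≤ n)
    (σ : K ≃+* K) (lam : K) (g : Vs K n → Vs K n)
    (hg : IsSymplecticCollineation σ lam g)
    -- θ is point-domestic:
    (hpd : ∀ x : Vs K n, sform x (g x) = 0) :
    -- the line ⟨p, p^θ⟩ through any non-fixed point p = ⟨x⟩ is fixed by θ …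
    (∀ x : Vs K n, x ≠ 0 → g x ∉ span K {x} →
      ∀ y ∈ span K {x, g x}, g y ∈ span K {x, g x}) ∧
    -- … equivalently, g²x ∈ span{x, gx} for every x
    (∀ x : Vs K n, g (g x) ∈ span K {x, g x}) :=
  pointDomestic_fixes_joining_line_general σ lam g hg hpd
end
end

section
/- Let K be a field, V a finite-dimensional K-vector space with dim V ≥ 3, and θ ∈ GL(V) such that θ²v ∈ span{v, θv} for every v ∈ V. Then the minimal polynomial of θ has degree at most 2, and exactly one of the following holds: (i) θ has no eigenvector; then θ² = t·θ − d·id for some t,d ∈ K with X² − tX + d irreducible over K, dim V is even, and the θ-invariant 2-dimensional subspaces of V partition V∖{0} (they form a line spread of PG(V)); (ii) θ is diagonalizable with at most two distinct eigenvalues (so the fixed points of the induced collineation of PG(V) form the union of two complementary subspaces, and θ is a homology or a scalar map); (iii) θ = λ·(id + N) for some λ ∈ K^× and some nonzero N with N² = 0 (θ is an elation). -/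
/-!
STATEMENT 5: Let V be a K-vector space, dim V ≥ 3, and θ ∈ GL(V) with θ²v ∈ span{v, θv}
for all v. Then the minimal polynomial of θ has degree ≤ 2 and exactly one of the
following holds: (i) θ has no eigenvector, θ² = tθ − d·id with X² − tX + d irreducible,
dim V is even and the θ-invariant 2-dimensional subspaces partition V∖{0} (a line
spread); (ii) θ is diagonalizable with at most two distinct eigenvalues; (iii)
θ = λ(id + N) with λ ≠ 0, N ≠ 0, N² = 0 (an elation).
-/

open Module Submodule Polynomial

noncomputable section

variable {K : Type*} [Field K] {V : Type*} [AddCommGroup V] [Module K V]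

/-- Case (i): θ has no eigenvector; θ² = t·θ − d·id with X² − tX + d irreducible over K;
dim V is even; and the θ-invariant 2-dimensional subspaces partition V∖{0}
(they form a line spread of PG(V)). -/
def SpreadCase (θ : V ≃ₗ[K] V) : Prop :=
  (¬ ∃ (c : K) (v : V), v ≠ 0 ∧ θ v = c • v) ∧
  (∃ t d : K, (∀ v : V, θ (θ v) = t • θ v - d • v) ∧
    Irreducible (X ^ 2 - C t * X + C d : K[X])) ∧
  Even (Module.finrank K V) ∧
  (∀ v : V, v ≠ 0 → ∃! W : Submodule K V,
    Module.finrank K W = 2 ∧ (∀ x ∈ W, θ x ∈ W) ∧ v ∈ W)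

/-- Case (ii): θ is diagonalizable with at most two distinct eigenvalues (so θ is a
homology or a scalar map, and the fixed points of the induced collineation form the
union of two complementary subspaces). -/
def HomologyCase (θ : V ≃ₗ[K] V) : Prop :=
  ∃ (a b : K) (W₁ W₂ : Submodule K V), W₁ ⊔ W₂ = ⊤ ∧
    (∀ x ∈ W₁, θ x = a • x) ∧ (∀ x ∈ W₂, θ x = b • x)

/-- Case (iii): θ = λ·(id + N) with λ ≠ 0 and N ≠ 0, N² = 0 (θ is an elation). -/
def ElationCase (θ : V ≃ₗ[K] V) : Prop :=
  ∃ (lam : K) (N : V →ₗ[K] V), lam ≠ 0 ∧ N ≠ 0 ∧ N ∘ₗ N = 0 ∧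
    ∀ v : V, θ v = lam • (v + N v)

universe u

lemma aux_pair_indep {v w : V} (hv0 : v ≠ 0) (hw : ∀ c : K, w ≠ c • v) :
    LinearIndependent K ![v, w] := by
  rw [LinearIndependent.pair_iff]
  intro s t h
  rcases eq_or_ne t 0 with ht | ht
  · subst ht
    simp only [zero_smul, add_zero] at h
    rcases smul_eq_zero.mp h with hs | hv
    · exact ⟨hs, rfl⟩
    · exact absurd hv hv0
  · exfalso
    apply hw (t⁻¹ * (-s))
    have h1 : t • w = (-s) • v := by linear_combination (norm := module) h
    calc w = t⁻¹ • (t • w) := by rw [smul_smul, inv_mul_cancel₀ ht, one_smul]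
    _ = (t⁻¹ * (-s)) • v := by rw [h1, smul_smul]

lemma aux_span_pair_finrank {v w : V} (h : LinearIndependent K ![v, w]) :
    finrank K (span K ({v, w} : Set V)) = 2 := by
  have hs : ({v, w} : Set V) = Set.range ![v, w] := by
    simp [Matrix.range_cons, Matrix.range_empty, Set.pair_comm]
  rw [hs, finrank_span_eq_card h]
  simp

lemma aux_coeff_unique {v w : V} (h : LinearIndependent K ![v, w]) {a b a' b' : K}
    (he : a • v + b • w = a' • v + b' • w) : a = a' ∧ b = b' := by
  have h0 : (a - a') • v + (b - b') • w = 0 := by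
    linear_combination (norm := module) he
  obtain ⟨h1, h2⟩ := LinearIndependent.pair_iff.mp h _ _ h0
  exact ⟨sub_eq_zero.mp h1, sub_eq_zero.mp h2⟩

lemma aux_planeRel (θ : V ≃ₗ[K] V) (v : V) (α β : K) (h : θ (θ v) = α • v + β • θ v) :
    ∀ x ∈ span K ({v, θ v} : Set V), θ (θ x) = α • x + β • θ x := by
  intro x hx
  induction hx using span_induction with
  | mem y hy =>
    rcases hy with rfl | rfl
    · exact h
    · rw [h]
      simp only [map_add, map_smul, h]
  | zero => simp
  | add y z _ _ hy hz => simp only [map_add, hy, hz]; module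
  | smul c y _ hy => simp only [map_smul, hy]; module

lemma aux_quad_no_root {t d : K} (hirr : Irreducible (X ^ 2 - C t * X + C d : K[X])) :
    ∀ c : K, c ^ 2 - t * c + d ≠ 0 := by
  intro c hc
  have h2 : (X ^ 2 - C t * X + C d : K[X]).natDegree = 2 := by compute_degree!
  have hdvd : (X - C c) ∣ (X ^ 2 - C t * X + C d : K[X]) := by
    apply dvd_iff_isRoot.mpr
    simp [IsRoot, hc]
  obtain ⟨q, hq⟩ := hdvd
  rcases hirr.isUnit_or_isUnit hq with hu | hu
  · exact Polynomial.not_isUnit_X_sub_C c hu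
  · have hq0 : q ≠ 0 := hu.ne_zero
    have := Polynomial.natDegree_mul (Polynomial.X_sub_C_ne_zero c) hq0
    rw [← hq, h2, Polynomial.natDegree_X_sub_C, Polynomial.natDegree_eq_zero_of_isUnit hu] at this
    omega

lemma aux_quad_irreducible {t d : K} (h : ∀ c : K, c ^ 2 - t * c + d ≠ 0) :
    Irreducible (X ^ 2 - C t * X + C d : K[X]) := by
  have hdeg : (X ^ 2 - C t * X + C d : K[X]).natDegree = 2 := by compute_degree!
  have hp0 : (X ^ 2 - C t * X + C d : K[X]) ≠ 0 := fun hh => by simp [hh] at hdeg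
  constructor
  · intro hu
    have := Polynomial.natDegree_eq_zero_of_isUnit hu
    omega
  · intro q r hqr
    by_contra hcon
    push_neg at hcon
    obtain ⟨hq, hr⟩ := hcon
    have hq0 : q ≠ 0 := by rintro rfl; rw [zero_mul] at hqr; exact hp0 hqr
    have hr0 : r ≠ 0 := by rintro rfl; rw [mul_zero] at hqr; exact hp0 hqr
    have hnd : q.natDegree + r.natDegree = 2 := by
      rw [← Polynomial.natDegree_mul hq0 hr0, ← hqr, hdeg]
    have hq1 : q.natDegree ≠ 0 := by
      intro h0
      obtain ⟨a, ha⟩ := Polynomial.natDegree_eq_zero.mp h0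
      apply hq
      rw [← ha, Polynomial.isUnit_C]
      exact isUnit_iff_ne_zero.mpr (fun h0' => hq0 (by rw [← ha, h0', map_zero]))
    have hr1 : r.natDegree ≠ 0 := by
      intro h0
      obtain ⟨a, ha⟩ := Polynomial.natDegree_eq_zero.mp h0
      apply hr
      rw [← ha, Polynomial.isUnit_C]
      exact isUnit_iff_ne_zero.mpr (fun h0' => hr0 (by rw [← ha, h0', map_zero]))
    have hqd : q.natDegree = 1 := by omega
    obtain ⟨x, hx⟩ := Polynomial.exists_root_of_degree_eq_one
      ((Polynomial.degree_eq_iff_natDegree_eq hq0).mpr hqd)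
    apply h x
    have hx' : q.eval x = 0 := hx
    have hev : (X ^ 2 - C t * X + C d : K[X]).eval x = 0 := by
      rw [hqr, Polynomial.eval_mul, hx', zero_mul]
    simpa using hev

lemma aux_even {t d : K} (hirr : Irreducible (X ^ 2 - C t * X + C d : K[X])) :
    ∀ (n : ℕ) {W : Type u} [AddCommGroup W] [Module K W] [FiniteDimensional K W]
      (f : W →ₗ[K] W), (∀ v, f (f v) = t • f v - d • v) → finrank K W = n → Even n := by
  intro n
  induction n using Nat.strong_induction_on with
  | _ n ih =>
    intro W _ _ _ f hf hn
    rcases Nat.eq_zero_or_pos n with h0 | hpos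
    · simp [h0]
    · have hnt : Nontrivial W := by
        rw [← finrank_pos_iff (R := K)]; omega
      obtain ⟨v, hv⟩ := exists_ne (0 : W)
      have hgen : ∀ c : K, f v ≠ c • v := by
        intro c hc
        have h1 := hf v
        rw [hc, map_smul, hc, smul_smul] at h1
        have h2 : (c * c - (t * c - d)) • v = 0 := by
          rw [sub_smul, h1, smul_smul, sub_smul]
          abel
        rcases smul_eq_zero.mp h2 with h3 | h3
        · exact aux_quad_no_root hirr c (by linear_combination h3)
        · exact hv h3
      have hind : LinearIndependent K ![v, f v] := aux_pair_indep hv hgen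
      set P : Submodule K W := span K ({v, f v} : Set W) with hP
      have hPrank : finrank K P = 2 := aux_span_pair_finrank hind
      have hle : P ≤ P.comap f := by
        rw [hP, span_le]
        intro x hx
        simp only [Set.mem_insert_iff, Set.mem_singleton_iff] at hx
        rcases hx with rfl | rfl
        · exact mem_comap.mpr (subset_span (by simp))
        · refine mem_comap.mpr ?_
          rw [hf]
          exact sub_mem (smul_mem _ _ (subset_span (by simp)))
            (smul_mem _ _ (subset_span (by simp)))
      set g : W ⧸ P →ₗ[K] W ⧸ P := P.mapQ P f hle with hg
      have hgrel : ∀ x : W ⧸ P, g (g x) = t • g x - d • x := by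
        intro x
        obtain ⟨y, rfl⟩ := Submodule.Quotient.mk_surjective P x
        simp only [hg, Submodule.mapQ_apply, hf, Submodule.Quotient.mk_sub,
          Submodule.Quotient.mk_smul]
      have hrank := Submodule.finrank_quotient_add_finrank P
      have hlt : finrank K (W ⧸ P) < n := by omega
      have heven := ih _ hlt g hgrel rfl
      rw [Nat.even_iff] at heven ⊢
      omega

lemma aux_not_SH [FiniteDimensional K V] (hdim : 3 ≤ Module.finrank K V) (θ : V ≃ₗ[K] V) :
    ¬ (SpreadCase θ ∧ HomologyCase θ) := by
  rintro ⟨⟨hno, -⟩, a, b, W₁, W₂, hsup, h1, h2⟩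
  have hnt : Nontrivial V := (finrank_pos_iff (R := K)).mp (by omega)
  have hne : W₁ ≠ ⊥ ∨ W₂ ≠ ⊥ := by
    by_contra hb
    push_neg at hb
    rw [hb.1, hb.2, sup_idem] at hsup
    exact bot_ne_top hsup
  rcases hne with hne | hne
  · obtain ⟨x, hx, hx0⟩ := (Submodule.ne_bot_iff _).mp hne
    exact hno ⟨a, x, hx0, h1 x hx⟩
  · obtain ⟨x, hx, hx0⟩ := (Submodule.ne_bot_iff _).mp hne
    exact hno ⟨b, x, hx0, h2 x hx⟩

lemma aux_not_SE (θ : V ≃ₗ[K] V) : ¬ (SpreadCase θ ∧ ElationCase θ) := by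
  rintro ⟨⟨hno, -⟩, lam, N, hlam, hN, hNN, hform⟩
  have hv : ∃ v : V, N v ≠ 0 := by
    by_contra hb
    push_neg at hb
    exact hN (LinearMap.ext fun v => hb v)
  obtain ⟨v, hv⟩ := hv
  have hNNv : N (N v) = 0 := by
    have := LinearMap.ext_iff.mp hNN v
    simpa using this
  exact hno ⟨lam, N v, hv, by rw [hform (N v), hNNv, add_zero]⟩

lemma aux_not_HE (θ : V ≃ₗ[K] V) : ¬ (HomologyCase θ ∧ ElationCase θ) := by
  rintro ⟨⟨a, b, W₁, W₂, hsup, h1, h2⟩, lam, N, hlam, hN, hNN, hform⟩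
  have hNN' : ∀ x : V, N (N x) = 0 := by
    intro x
    have := LinearMap.ext_iff.mp hNN x
    simpa using this
  have key : ∀ (c : K) (v : V), v ≠ 0 → θ v = c • v → c = lam := by
    intro c v hv0 hcv
    have h : lam • (v + N v) = c • v := by rw [← hform, hcv]
    have hNv : N v = (lam⁻¹ * c - 1) • v := by
      have h2' : v + N v = (lam⁻¹ * c) • v := by
        calc v + N v = lam⁻¹ • (lam • (v + N v)) := by
              rw [smul_smul, inv_mul_cancel₀ hlam, one_smul]
        _ = (lam⁻¹ * c) • v := by rw [h, smul_smul]
      have := h2'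
      linear_combination (norm := module) this
    have hsq : ((lam⁻¹ * c - 1) * (lam⁻¹ * c - 1)) • v = 0 := by
      rw [← smul_smul, ← hNv, ← map_smul, ← hNv, hNN']
    rcases smul_eq_zero.mp hsq with h3 | h3
    · have h4 : lam⁻¹ * c - 1 = 0 := by
        rcases mul_self_eq_zero.mp h3 with h4
        exact h4
      have h5 : lam⁻¹ * c = 1 := by linear_combination h4
      calc c = lam * (lam⁻¹ * c) := by field_simp
      _ = lam := by rw [h5, mul_one]
    · exact absurd h3 hv0
  set U : Submodule K V := LinearMap.ker (θ.toLinearMap - lam • LinearMap.id) with hU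
  have hUmem : ∀ x : V, x ∈ U ↔ θ x = lam • x := by
    intro x
    rw [hU, LinearMap.mem_ker, LinearMap.sub_apply, LinearMap.smul_apply, LinearMap.id_apply,
      sub_eq_zero]
    exact Iff.rfl
  have hW₁ : W₁ ≤ U := by
    rcases eq_or_ne W₁ ⊥ with rfl | hne
    · exact bot_le
    · obtain ⟨x, hx, hx0⟩ := (Submodule.ne_bot_iff _).mp hne
      have ha : a = lam := key a x hx0 (h1 x hx)
      intro y hy
      rw [hUmem, ← ha]
      exact h1 y hy
  have hW₂ : W₂ ≤ U := by
    rcases eq_or_ne W₂ ⊥ with rfl | hne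
    · exact bot_le
    · obtain ⟨x, hx, hx0⟩ := (Submodule.ne_bot_iff _).mp hne
      have hb : b = lam := key b x hx0 (h2 x hx)
      intro y hy
      rw [hUmem, ← hb]
      exact h2 y hy
  have hall : ∀ v : V, θ v = lam • v := by
    intro v
    have : v ∈ U := by
      have : v ∈ W₁ ⊔ W₂ := by rw [hsup]; trivial
      exact (sup_le hW₁ hW₂) this
    exact (hUmem v).mp this
  apply hN
  apply LinearMap.ext
  intro v
  have := hall v
  rw [hform v] at this
  have h6 : lam • N v = 0 := by linear_combination (norm := module) this
  rcases smul_eq_zero.mp h6 with h7 | h7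
  · exact absurd h7 hlam
  · simpa using h7

theorem linear_collineation_with_fixed_joining_lines
    [FiniteDimensional K V] (hdim : 3 ≤ Module.finrank K V)
    (θ : V ≃ₗ[K] V)
    (hθ : ∀ v : V, θ (θ v) ∈ span K {v, θ v}) :
    (minpoly K (θ.toLinearMap : Module.End K V)).natDegree ≤ 2 ∧
    (SpreadCase θ ∨ HomologyCase θ ∨ ElationCase θ) ∧
    ¬ (SpreadCase θ ∧ HomologyCase θ) ∧
    ¬ (SpreadCase θ ∧ ElationCase θ) ∧
    ¬ (HomologyCase θ ∧ ElationCase θ) := by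
  have hnt : Nontrivial V := (finrank_pos_iff (R := K)).mp (by omega)
  have hco : ∀ v : V, ∃ α β : K, θ (θ v) = α • v + β • θ v := by
    intro v
    obtain ⟨α, β, h⟩ := Submodule.mem_span_pair.mp (hθ v)
    exact ⟨α, β, h.symm⟩
  have hv0 : ∀ {v : V}, (∀ c : K, θ v ≠ c • v) → v ≠ 0 := by
    intro v hv h0
    exact hv 0 (by rw [h0, map_zero, zero_smul])
  have hindep : ∀ {v : V}, (∀ c : K, θ v ≠ c • v) → LinearIndependent K ![v, θ v] :=
    fun hv => aux_pair_indep (hv0 hv) hv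
  have main : SpreadCase θ ∨ HomologyCase θ ∨ ElationCase θ := by
    by_cases hex : ∃ (c : K) (v : V), v ≠ 0 ∧ θ v = c • v
    · -- eigenvector exists
      obtain ⟨c, v₀, hv₀0, hv₀⟩ := hex
      by_cases hall : ∀ w : V, w ≠ 0 → ∃ e : K, θ w = e • w
      · -- θ is scalar
        have hsc : ∀ w : V, θ w = c • w := by
          intro w
          rcases eq_or_ne w 0 with rfl | hw
          · rw [map_zero, smul_zero]
          obtain ⟨e, he⟩ := hall w hw
          suffices hec : e = c by rw [he, hec]
          by_cases hdep : ∃ k : K, w = k • v₀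
          · obtain ⟨k, rfl⟩ := hdep
            have h1 : θ (k • v₀) = c • (k • v₀) := by
              rw [map_smul, hv₀, smul_comm]
            have h2 : (e - c) • (k • v₀) = 0 := by
              rw [sub_smul, ← he, h1, sub_self]
            rcases smul_eq_zero.mp h2 with h3 | h3
            · exact sub_eq_zero.mp h3
            · exact absurd h3 hw
          · push_neg at hdep
            have hind : LinearIndependent K ![v₀, w] :=
              aux_pair_indep hv₀0 (fun k hk => hdep k hk)
            have hu0 : v₀ + w ≠ 0 := by
              intro h
              apply hdep (-1)
              rw [neg_one_smul, eq_comm, neg_eq_iff_add_eq_zero, add_comm]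
              rw [add_comm]
              exact h
            obtain ⟨eu, heu⟩ := hall (v₀ + w) hu0
            have hexp : c • v₀ + e • w = eu • v₀ + eu • w := by
              rw [← hv₀, ← he, ← map_add, heu, smul_add]
            obtain ⟨h1, h2⟩ := aux_coeff_unique hind hexp
            rw [h2, ← h1]
        exact Or.inr (Or.inl ⟨c, c, ⊤, ⊤, by simp, fun x _ => hsc x, fun x _ => hsc x⟩)
      · push_neg at hall
        obtain ⟨w₀, hw₀0, hw₀⟩ := hall
        -- Fact F: eigenvalues are roots of every generic quadratic
        have hF : ∀ (e : K) (v : V), v ≠ 0 → θ v = e • v →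
            ∀ (w : V), (∀ c'' : K, θ w ≠ c'' • w) →
            ∀ α β : K, θ (θ w) = α • w + β • θ w → e ^ 2 = α + β * e := by
          intro e v hv hev w hwgen α β hw
          have hindw : LinearIndependent K ![w, θ w] := hindep hwgen
          by_cases hmem : v ∈ span K ({w, θ w} : Set V)
          · have h3 := aux_planeRel θ w α β hw v hmem
            rw [hev, map_smul, hev, smul_smul] at h3
            have h4 : (e * e - (α + β * e)) • v = 0 := by
              linear_combination (norm := module) h3
            rcases smul_eq_zero.mp h4 with h5 | h5
            · linear_combination h5
            · exact absurd h5 hv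
          · obtain ⟨s, r, hsr⟩ := hco (v + w)
            have hx : (e * e - s - r * e) • v = (s - α) • w + (r - β) • θ w := by
              have hL : θ (θ (v + w)) = (e * e) • v + (α • w + β • θ w) := by
                rw [map_add, map_add, hw, hev, map_smul, hev, smul_smul]
              rw [hL, map_add, hev] at hsr
              linear_combination (norm := module) hsr
            by_cases he0 : e * e - s - r * e = 0
            · rw [he0, zero_smul] at hx
              obtain ⟨h1, h2⟩ := LinearIndependent.pair_iff.mp hindw _ _ hx.symm
              linear_combination he0 + h1 + e * h2
            · exfalso
              apply hmem
              have hv' : v = (e * e - s - r * e)⁻¹ • ((s - α) • w + (r - β) • θ w) := by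
                rw [← hx, smul_smul, inv_mul_cancel₀ he0, one_smul]
              rw [hv']
              exact smul_mem _ _ (add_mem (smul_mem _ _ (subset_span (by simp)))
                (smul_mem _ _ (subset_span (by simp))))
        by_cases hdist : ∃ (c' : K) (v' : V), v' ≠ 0 ∧ θ v' = c' • v' ∧ c' ≠ c
        · -- two eigenvalues: homology case
          obtain ⟨c', v', hv'0, hv', hcc⟩ := hdist
          have hcoef : ∀ (w : V), (∀ e : K, θ w ≠ e • w) →
              ∀ α β : K, θ (θ w) = α • w + β • θ w → β = c + c' ∧ α = -(c * c') := by
            intro w hwgen α β hw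
            have h1 := hF c v₀ hv₀0 hv₀ w hwgen α β hw
            have h2 := hF c' v' hv'0 hv' w hwgen α β hw
            have hne : c - c' ≠ 0 := sub_ne_zero.mpr (Ne.symm hcc)
            have hβ : β = c + c' := by
              have h3 : (c + c') * (c - c') = β * (c - c') := by linear_combination h1 - h2
              exact (mul_right_cancel₀ hne h3).symm
            exact ⟨hβ, by linear_combination -h1 - c * hβ⟩
          have hglob2 : ∀ v : V, θ (θ v) = (c + c') • θ v - (c * c') • v := by
            intro v
            rcases eq_or_ne v 0 with rfl | hv
            · rw [map_zero, map_zero, smul_zero, smul_zero, sub_zero]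
            by_cases hvgen : ∀ e : K, θ v ≠ e • v
            · obtain ⟨α, β, hv2⟩ := hco v
              obtain ⟨hβ, hα⟩ := hcoef v hvgen α β hv2
              rw [hv2, hβ, hα]
              module
            · push_neg at hvgen
              obtain ⟨e, he⟩ := hvgen
              have hroots : (e - c) * (e - c') = 0 := by
                obtain ⟨α, β, hw2⟩ := hco w₀
                have h1 := hF e v hv he w₀ hw₀ α β hw2
                obtain ⟨hβ, hα⟩ := hcoef w₀ hw₀ α β hw2
                linear_combination h1 + hα + e * hβ
              have hsc2 : e * e = (c + c') * e - c * c' := by linear_combination hroots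
              rw [he, map_smul, he, smul_smul, hsc2]
              module
          refine Or.inr (Or.inl ?_)
          set f := (θ.toLinearMap : V →ₗ[K] V) with hf
          set W₁ : Submodule K V := LinearMap.ker (f - c • LinearMap.id) with hW₁
          set W₂ : Submodule K V := LinearMap.ker (f - c' • LinearMap.id) with hW₂
          have hmem₁ : ∀ x : V, x ∈ W₁ ↔ θ x = c • x := by
            intro x
            rw [hW₁, LinearMap.mem_ker, LinearMap.sub_apply, LinearMap.smul_apply,
              LinearMap.id_apply, sub_eq_zero]
            exact Iff.rfl
          have hmem₂ : ∀ x : V, x ∈ W₂ ↔ θ x = c' • x := by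
            intro x
            rw [hW₂, LinearMap.mem_ker, LinearMap.sub_apply, LinearMap.smul_apply,
              LinearMap.id_apply, sub_eq_zero]
            exact Iff.rfl
          refine ⟨c, c', W₁, W₂, ?_, fun x hx => (hmem₁ x).mp hx, fun x hx => (hmem₂ x).mp hx⟩
          rw [eq_top_iff]
          intro v _
          rw [Submodule.mem_sup]
          have hne : c - c' ≠ 0 := sub_ne_zero.mpr (Ne.symm hcc)
          refine ⟨(c - c')⁻¹ • (θ v - c' • v), ?_, -(c - c')⁻¹ • (θ v - c • v), ?_, ?_⟩
          · rw [hmem₁, map_smul, map_sub, map_smul, hglob2 v]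
            match_scalars <;> ring
          · rw [hmem₂, map_smul, map_sub, map_smul, hglob2 v]
            match_scalars <;> ring
          · match_scalars <;> field_simp <;> ring
        · -- single eigenvalue: elation case
          push_neg at hdist
          have hcoef : ∀ (w : V), (∀ e : K, θ w ≠ e • w) →
              ∀ α β : K, θ (θ w) = α • w + β • θ w → β = 2 * c ∧ α = -(c * c) := by
            intro w hwgen α β hw
            have h1 := hF c v₀ hv₀0 hv₀ w hwgen α β hw
            set z := θ w - c • w with hz
            have hz0 : z ≠ 0 := by
              rw [hz, sub_ne_zero]
              exact hwgen c
            have hzeig : θ z = (β - c) • z := by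
              have hα : α = -((β - c) * c) := by linear_combination -h1
              rw [hz, map_sub, map_smul, hw, hα]
              module
            have hbc := hdist (β - c) z hz0 hzeig
            refine ⟨by linear_combination hbc, by linear_combination -h1 - c * hbc⟩
          have hc0 : c ≠ 0 := by
            rintro rfl
            rw [zero_smul] at hv₀
            exact hv₀0 (θ.injective (by rw [hv₀, map_zero]))
          set N : V →ₗ[K] V := c⁻¹ • (θ.toLinearMap - c • LinearMap.id) with hN
          have hNapp : ∀ v : V, N v = c⁻¹ • (θ v - c • v) := by
            intro v
            rw [hN]
            simp [LinearMap.sub_apply, LinearMap.smul_apply, LinearMap.id_apply]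
          have hsq : ∀ v : V, θ (θ v) = (2 * c) • θ v - (c * c) • v := by
            intro v
            rcases eq_or_ne v 0 with rfl | hv
            · rw [map_zero, map_zero, smul_zero, smul_zero, sub_zero]
            by_cases hvgen : ∀ e : K, θ v ≠ e • v
            · obtain ⟨α, β, h⟩ := hco v
              obtain ⟨hβ, hα⟩ := hcoef v hvgen α β h
              rw [h, hβ, hα]
              module
            · push_neg at hvgen
              obtain ⟨e, he⟩ := hvgen
              have hec : e = c := hdist e v hv he
              rw [he, map_smul, he, hec]
              module
          have hN2 : N ∘ₗ N = 0 := by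
            apply LinearMap.ext
            intro v
            simp only [LinearMap.comp_apply, LinearMap.zero_apply, hNapp]
            rw [map_smul, map_sub, map_smul, hsq v]
            match_scalars <;> field_simp <;> ring
          refine Or.inr (Or.inr ⟨c, N, hc0, ?_, hN2, ?_⟩)
          · intro h0
            apply hw₀ c
            have h1 := hNapp w₀
            rw [h0, LinearMap.zero_apply] at h1
            have h2 : θ w₀ - c • w₀ = 0 := by
              rcases smul_eq_zero.mp h1.symm with h3 | h3
              · exact absurd h3 (inv_ne_zero hc0)
              · exact h3
            linear_combination (norm := module) h2
          · intro v
            rw [hNapp]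
            match_scalars <;> field_simp <;> ring
    · -- no eigenvector: spread case
      push_neg at hex
      have hgen : ∀ v : V, v ≠ 0 → ∀ e : K, θ v ≠ e • v := fun v hv e => hex e v hv
      obtain ⟨v₀, hv₀⟩ := exists_ne (0 : V)
      obtain ⟨α₀, β₀, h₀⟩ := hco v₀
      have hglob : ∀ w : V, θ (θ w) = β₀ • θ w - (-α₀) • w := by
        intro w
        rcases eq_or_ne w 0 with rfl | hw
        · rw [map_zero, map_zero, smul_zero, smul_zero, sub_zero]
        obtain ⟨α, β, hw'⟩ := hco w
        suffices h : α = α₀ ∧ β = β₀ by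
          rw [hw', h.1, h.2]
          module
        by_cases hint : span K ({v₀, θ v₀} : Set V) ⊓ span K ({w, θ w} : Set V) = ⊥
        · set u := v₀ + w with hu
          have hu0 : u ≠ 0 := by
            intro h
            have hwv : w = -v₀ := by
              rw [eq_comm, neg_eq_iff_add_eq_zero, add_comm]
              rw [add_comm]
              exact h
            have hm1 : w ∈ span K ({v₀, θ v₀} : Set V) := by
              rw [hwv]
              exact neg_mem (subset_span (by simp))
            have hm2 : w ∈ span K ({w, θ w} : Set V) := subset_span (by simp)
            have : w ∈ (⊥ : Submodule K V) := hint ▸ Submodule.mem_inf.mpr ⟨hm1, hm2⟩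
            exact hw ((Submodule.mem_bot K).mp this)
          obtain ⟨αu, βu, hu'⟩ := hco u
          have hx : (α₀ - αu) • v₀ + (β₀ - βu) • θ v₀ =
              (αu - α) • w + (βu - β) • θ w := by
            have hL : θ (θ u) = (α₀ • v₀ + β₀ • θ v₀) + (α • w + β • θ w) := by
              rw [hu, map_add, map_add, h₀, hw']
            rw [hL, hu, map_add] at hu'
            linear_combination (norm := module) hu'
          have hz1 : (α₀ - αu) • v₀ + (β₀ - βu) • θ v₀ ∈ span K ({v₀, θ v₀} : Set V) :=
            add_mem (smul_mem _ _ (subset_span (by simp))) (smul_mem _ _ (subset_span (by simp)))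
          have hz2 : (α₀ - αu) • v₀ + (β₀ - βu) • θ v₀ ∈ span K ({w, θ w} : Set V) := by
            rw [hx]
            exact add_mem (smul_mem _ _ (subset_span (by simp)))
              (smul_mem _ _ (subset_span (by simp)))
          have hz0 : (α₀ - αu) • v₀ + (β₀ - βu) • θ v₀ = 0 := by
            have := hint ▸ Submodule.mem_inf.mpr ⟨hz1, hz2⟩
            exact (Submodule.mem_bot K).mp this
          obtain ⟨ea, eb⟩ := LinearIndependent.pair_iff.mp (hindep (hgen v₀ hv₀)) _ _ hz0
          have hx0 : (αu - α) • w + (βu - β) • θ w = 0 := by rw [← hx, hz0]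
          obtain ⟨ea', eb'⟩ := LinearIndependent.pair_iff.mp (hindep (hgen w hw)) _ _ hx0
          constructor
          · linear_combination -ea - ea'
          · linear_combination -eb - eb'
        · obtain ⟨z, hzmem, hz0⟩ := (Submodule.ne_bot_iff _).mp hint
          have h1 := aux_planeRel θ v₀ α₀ β₀ h₀ z (Submodule.mem_inf.mp hzmem).1
          have h2 := aux_planeRel θ w α β hw' z (Submodule.mem_inf.mp hzmem).2
          obtain ⟨ea, eb⟩ := aux_coeff_unique (hindep (hgen z hz0)) (h2.symm.trans h1)
          exact ⟨ea, eb⟩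
      have hroot : ∀ e : K, e ^ 2 - β₀ * e + -α₀ ≠ 0 := by
        intro e he
        set e' := β₀ - e with he'
        have hcomp : ∀ v : V, θ (θ v - e' • v) - e • (θ v - e' • v) = 0 := by
          intro v
          rw [map_sub, map_smul, hglob v]
          have hkey : (β₀ - e' - e) = 0 := by rw [he']; ring
          match_scalars
          · linear_combination hkey
          · linear_combination -he + (e - β₀) * hkey
        set g : V →ₗ[K] V := θ.toLinearMap - e' • LinearMap.id with hg
        have hgapp : ∀ v : V, g v = θ v - e' • v := by
          intro v
          rw [hg]
          simp [LinearMap.sub_apply, LinearMap.smul_apply, LinearMap.id_apply]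
        rcases eq_or_ne (LinearMap.ker g) ⊥ with hker | hker
        · have hinj : Function.Injective g := LinearMap.ker_eq_bot.mp hker
          have hsurj : Function.Surjective g := LinearMap.surjective_of_injective hinj
          obtain ⟨y, hy⟩ := hsurj v₀
          apply hgen v₀ hv₀ e
          have := hcomp y
          rw [← hgapp y, hy] at this
          · rw [sub_eq_zero] at this
            exact this
        · obtain ⟨z, hzmem, hz0⟩ := (Submodule.ne_bot_iff _).mp hker
          apply hgen z hz0 e'
          have := LinearMap.mem_ker.mp hzmem
          rw [hgapp, sub_eq_zero] at this
          exact this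
      have hirr : Irreducible (X ^ 2 - C β₀ * X + C (-α₀) : K[X]) :=
        aux_quad_irreducible hroot
      refine Or.inl ⟨?_, ⟨β₀, -α₀, hglob, hirr⟩, ?_, ?_⟩
      · push_neg
        exact fun e v hv => hex e v hv
      · exact aux_even hirr (finrank K V) θ.toLinearMap (fun v => hglob v) rfl
      · intro v hv
        refine ⟨span K ({v, θ v} : Set V), ⟨aux_span_pair_finrank (hindep (hgen v hv)), ?_, ?_⟩, ?_⟩
        · intro x hx
          have hle : span K ({v, θ v} : Set V) ≤
              (span K ({v, θ v} : Set V)).comap θ.toLinearMap := by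
            rw [span_le]
            intro y hy
            simp only [Set.mem_insert_iff, Set.mem_singleton_iff] at hy
            rcases hy with rfl | rfl
            · exact Submodule.mem_comap.mpr (subset_span (by simp))
            · refine Submodule.mem_comap.mpr ?_
              have : θ.toLinearMap (θ v) = θ (θ v) := rfl
              rw [this, hglob v]
              exact sub_mem (smul_mem _ _ (subset_span (by simp)))
                (smul_mem _ _ (subset_span (by simp)))
          exact Submodule.mem_comap.mp (hle hx)
        · exact subset_span (by simp)
        · rintro W' ⟨hr2, hinv, hmem⟩
          have hsub : span K ({v, θ v} : Set V) ≤ W' := by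
            rw [span_le]
            intro y hy
            simp only [Set.mem_insert_iff, Set.mem_singleton_iff] at hy
            rcases hy with rfl | rfl
            · exact hmem
            · exact hinv _ hmem
          exact (Submodule.eq_of_le_of_finrank_le hsub
            (by rw [hr2, aux_span_pair_finrank (hindep (hgen v hv))])).symm
  have hrel : ∃ t d : K, ∀ v : V, θ (θ v) = t • θ v - d • v := by
    rcases main with ⟨-, ⟨t, d, h, -⟩, -, -⟩ | h | h
    · exact ⟨t, d, h⟩
    · obtain ⟨a, b, W₁, W₂, hsup, h1, h2⟩ := h
      refine ⟨a + b, a * b, ?_⟩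
      intro v
      have hv : v ∈ W₁ ⊔ W₂ := by rw [hsup]; trivial
      obtain ⟨x, hx, y, hy, rfl⟩ := Submodule.mem_sup.mp hv
      rw [map_add, map_add, h1 x hx, h2 y hy, map_smul, map_smul, h1 x hx, h2 y hy]
      module
    · obtain ⟨lam, N, hlam, hN0, hN2, hform⟩ := h
      refine ⟨2 * lam, lam * lam, ?_⟩
      intro v
      have hNN : ∀ x : V, N (N x) = 0 := by
        intro x
        have := LinearMap.ext_iff.mp hN2 x
        simpa using this
      have h1 : N (θ v) = lam • N v := by
        rw [hform v, map_smul, map_add, hNN v, add_zero]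
      rw [hform (θ v), h1, hform v]
      module
  obtain ⟨t, d, hrel'⟩ := hrel
  have hann : (Polynomial.aeval (θ.toLinearMap : Module.End K V))
      (X ^ 2 - C t * X + C d) = 0 := by
    apply LinearMap.ext
    intro v
    simp only [map_sub, map_add, map_pow, map_mul, aeval_X, aeval_C, LinearMap.sub_apply,
      LinearMap.add_apply, LinearMap.zero_apply, Module.algebraMap_end_apply,
      Module.End.mul_apply, pow_two, LinearEquiv.coe_coe]
    rw [hrel' v]
    abel
  have hdvd := minpoly.dvd K (θ.toLinearMap : Module.End K V) hann
  have hdeg : (X ^ 2 - C t * X + C d : K[X]).natDegree = 2 := by compute_degree!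
  have hne : (X ^ 2 - C t * X + C d : K[X]) ≠ 0 := fun h => by simp [h] at hdeg
  exact ⟨le_trans (Polynomial.natDegree_le_of_dvd hdvd hne) (le_of_eq hdeg), main,
    aux_not_SH hdim θ, aux_not_SE θ, aux_not_HE θ⟩
end
end

section
/- Let K be a field, σ a nontrivial automorphism of K, and V a finite-dimensional K-vector space with dim V ≥ 4. Let g be a σ-semilinear bijection of V such that g²v ∈ span{v, gv} for every v ∈ V and such that no 1-dimensional subspace of V is g-invariant. Then σ² = id, g² = c·id_V for some c ∈ K^× (so the collineation of PG(V) induced by g is a fixed-point-free involution), and dim V is even. -/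
/-!
Every line `⟨v, g v⟩` is `g`-invariant, and a `g`-invariant subspace `U` meets the line
`⟨u, g u⟩` of a vector `u ∉ U` only in `0`: a common nonzero vector `x` would span the invariant
line `⟨x, g x⟩ = ⟨u, g u⟩`, forcing `u ∈ U`. Writing `g² v = a v + b g v` and comparing the
coefficients for `v`, `u` and `v + u` on two such disjoint lines shows that `a` and `b` do not
depend on `v` (using `dim V ≥ 3` to route through a third line). Evaluating at `l v` gives
`σ²(l) b = b σ(l)` and `σ²(l) a = a l`, so `b = 0` as `σ ≠ id`, then `a ≠ 0` and `σ² = id`.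
Finally, adjoining such a line to an invariant subspace `U ≠ V` raises its dimension by exactly 2,
so `dim V` is even.
-/

open Module Submodule

namespace SemilinearMap

variable {K V : Type*} [Field K] [AddCommGroup V] [Module K V] {σ : K →+* K}
  {f : V →ₛₗ[σ] V}

theorem span_pair_le_comap {v : V} (hv : f (f v) ∈ span K {v, f v}) :
    span K {v, f v} ≤ (span K {v, f v}).comap f := by
  rw [span_le, Set.insert_subset_iff, Set.singleton_subset_iff]
  exact ⟨subset_span (Set.mem_insert_of_mem _ rfl), hv⟩

theorem linearIndependent_pair_apply {v : V} (hv : v ≠ 0) (hfv : f v ∉ span K {v}) :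
    LinearIndependent K ![v, f v] :=
  (LinearIndependent.pair_iff' hv).2 fun a ha ↦ hfv (ha ▸ smul_mem _ a (mem_span_singleton_self v))

theorem finrank_span_pair_apply {v : V} (hv : v ≠ 0) (hfv : f v ∉ span K {v}) :
    finrank K (span K {v, f v}) = 2 := by
  rw [← Matrix.range_cons_cons_empty v (f v) ![]]
  simp [finrank_span_eq_card (linearIndependent_pair_apply hv hfv)]

theorem span_pair_apply_eq_of_mem (hline : ∀ v, f (f v) ∈ span K {v, f v})
    (hfix : ∀ v, v ≠ 0 → f v ∉ span K {v}) {u x : V} (hx : x ∈ span K {u, f u}) (hx0 : x ≠ 0) :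
    span K {x, f x} = span K {u, f u} := by
  have hu : u ≠ 0 := by rintro rfl; simp_all
  have : FiniteDimensional K (span K {u, f u}) := .span_of_finite K (Set.toFinite _)
  refine eq_of_le_of_finrank_eq ?_ ?_
  · rw [span_le, Set.insert_subset_iff, Set.singleton_subset_iff]
    exact ⟨hx, span_pair_le_comap (hline u) hx⟩
  · rw [finrank_span_pair_apply hx0 (hfix _ hx0), finrank_span_pair_apply hu (hfix _ hu)]

theorem disjoint_span_pair_apply (hline : ∀ v, f (f v) ∈ span K {v, f v})
    (hfix : ∀ v, v ≠ 0 → f v ∉ span K {v}) {U : Submodule K V} (hU : U ≤ U.comap f) {u : V}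
    (hu : u ∉ U) : Disjoint U (span K {u, f u}) := by
  refine disjoint_def.2 fun x hxU hx ↦ by_contra fun hx0 ↦ hu ?_
  have : span K {x, f x} ≤ U := by
    rw [span_le, Set.insert_subset_iff, Set.singleton_subset_iff]
    exact ⟨hxU, hU hxU⟩
  exact this (span_pair_apply_eq_of_mem hline hfix hx hx0 ▸ subset_span (Set.mem_insert u _))

theorem apply_apply_eq_of_notMem_span_pair (hline : ∀ v, f (f v) ∈ span K {v, f v})
    (hfix : ∀ v, v ≠ 0 → f v ∉ span K {v}) {v u : V} {a b : K} (hv0 : v ≠ 0)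
    (hv : f (f v) = a • v + b • f v) (hu : u ∉ span K {v, f v}) :
    f (f u) = a • u + b • f u := by
  have hu0 : u ≠ 0 := by rintro rfl; exact hu (zero_mem _)
  obtain ⟨a', b', hu'⟩ := mem_span_pair.1 (hline u)
  obtain ⟨c, d, hvu⟩ := mem_span_pair.1 (hline (v + u))
  rw [map_add, map_add, hv, ← hu'] at hvu
  have hx : c • v + d • f v - (a • v + b • f v) = 0 := by
    refine disjoint_def.1
      (disjoint_span_pair_apply hline hfix (span_pair_le_comap (hline v)) hu) _
      (sub_mem (mem_span_pair.2 ⟨c, d, rfl⟩) (mem_span_pair.2 ⟨a, b, rfl⟩)) ?_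
    have : c • v + d • f v - (a • v + b • f v) = a' • u + b' • f u - (c • u + d • f u) := by
      linear_combination (norm := module) hvu
    exact this ▸ sub_mem (mem_span_pair.2 ⟨a', b', rfl⟩) (mem_span_pair.2 ⟨c, d, rfl⟩)
  have hy : a' • u + b' • f u = c • u + d • f u := by
    linear_combination (norm := module) hx - hvu
  obtain ⟨rfl, rfl⟩ :=
    (linearIndependent_pair_apply hv0 (hfix _ hv0)).eq_of_pair (sub_eq_zero.1 hx)
  obtain ⟨rfl, rfl⟩ := (linearIndependent_pair_apply hu0 (hfix _ hu0)).eq_of_pair hy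
  exact hu'.symm

theorem exists_apply_apply_eq (hline : ∀ v, f (f v) ∈ span K {v, f v})
    (hfix : ∀ v, v ≠ 0 → f v ∉ span K {v}) (hdim : 2 < finrank K V) :
    ∃ a b : K, ∀ v, f (f v) = a • v + b • f v := by
  have : Nontrivial V := nontrivial_of_finrank_pos (R := K) (by omega)
  obtain ⟨v, hv⟩ := exists_ne (0 : V)
  obtain ⟨a, b, hab⟩ := mem_span_pair.1 (hline v)
  refine ⟨a, b, fun w ↦ ?_⟩
  have off_line : ∀ {u}, u ∉ span K {v, f v} → f (f u) = a • u + b • f u :=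
    apply_apply_eq_of_notMem_span_pair hline hfix hv hab.symm
  by_cases hw : w ∈ span K {v, f v}
  · obtain rfl | hw0 := eq_or_ne w 0
    · simp
    obtain ⟨u, -, hu⟩ : ∃ u ∈ ⊤, u ∉ span K {v, f v} := by
      refine SetLike.exists_of_lt (lt_top_iff_ne_top.2 fun h ↦ ?_)
      have := finrank_span_pair_apply hv (hfix _ hv)
      rw [h, finrank_top] at this
      omega
    have hwu : w ∉ span K {u, f u} := fun hwu ↦ hw0 <| disjoint_def.1
      (disjoint_span_pair_apply hline hfix (span_pair_le_comap (hline v)) hu) w hw hwu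
    exact apply_apply_eq_of_notMem_span_pair hline hfix (by rintro rfl; exact hu (zero_mem _))
      (off_line hu) hwu
  · exact off_line hw

theorem ringHom_ringHom_mul_coeff_eq (hfix : ∀ v, v ≠ 0 → f v ∉ span K {v}) {a b : K}
    (hab : ∀ v, f (f v) = a • v + b • f v) {v : V} (hv : v ≠ 0) (l : K) :
    σ (σ l) * a = a * l ∧ σ (σ l) * b = b * σ l := by
  have h := hab (l • v)
  rw [map_smulₛₗ, map_smulₛₗ, hab v] at h
  exact (linearIndependent_pair_apply hv (hfix _ hv)).eq_of_pair
    (by linear_combination (norm := module) h)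

theorem exists_apply_apply_eq_smul (hline : ∀ v, f (f v) ∈ span K {v, f v})
    (hfix : ∀ v, v ≠ 0 → f v ∉ span K {v}) (hdim : 2 < finrank K V) (hσ : ∃ l, σ l ≠ l) :
    (∀ l, σ (σ l) = l) ∧ ∃ c : K, c ≠ 0 ∧ ∀ v, f (f v) = c • v := by
  obtain ⟨a, b, hab⟩ := exists_apply_apply_eq hline hfix hdim
  have : Nontrivial V := nontrivial_of_finrank_pos (R := K) (by omega)
  obtain ⟨v, hv⟩ := exists_ne (0 : V)
  have hcoeff := ringHom_ringHom_mul_coeff_eq hfix hab hv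
  obtain ⟨l, hl⟩ := hσ
  have hb : b = 0 := by
    by_contra hb
    exact hl (σ.injective (mul_right_cancel₀ hb ((hcoeff l).2.trans (mul_comm _ _))))
  have ha : a ≠ 0 := by
    rintro rfl
    have hfv : f v ≠ 0 := fun h ↦ hfix v hv (h ▸ zero_mem _)
    exact hfix (f v) hfv (by simp [hab, hb])
  exact ⟨fun l ↦ mul_right_cancel₀ ha ((hcoeff l).1.trans (mul_comm _ _)), a, ha,
    fun w ↦ by simpa [hb] using hab w⟩

theorem exists_finrank_eq_add_two [FiniteDimensional K V]
    (hline : ∀ v, f (f v) ∈ span K {v, f v}) (hfix : ∀ v, v ≠ 0 → f v ∉ span K {v})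
    {U : Submodule K V} (hU : U ≤ U.comap f) (hUtop : U ≠ ⊤) :
    ∃ W : Submodule K V, W ≤ W.comap f ∧ finrank K W = finrank K U + 2 := by
  obtain ⟨u, -, hu⟩ := SetLike.exists_of_lt (lt_top_iff_ne_top.2 hUtop)
  have hu0 : u ≠ 0 := by rintro rfl; exact hu (zero_mem _)
  refine ⟨U ⊔ span K {u, f u}, sup_le (hU.trans (comap_mono le_sup_left))
    ((span_pair_le_comap (hline u)).trans (comap_mono le_sup_right)), ?_⟩
  have hsum := finrank_sup_add_finrank_inf_eq U (span K {u, f u})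
  rwa [(disjoint_span_pair_apply hline hfix hU hu).eq_bot, finrank_bot, add_zero,
    finrank_span_pair_apply hu0 (hfix _ hu0)] at hsum

theorem even_finrank_sub [FiniteDimensional K V]
    (hline : ∀ v, f (f v) ∈ span K {v, f v}) (hfix : ∀ v, v ≠ 0 → f v ∉ span K {v})
    (U : Submodule K V) (hU : U ≤ U.comap f) : Even (finrank K V - finrank K U) := by
  by_cases hUtop : U = ⊤
  · rw [hUtop, finrank_top, Nat.sub_self]
    exact .zero
  obtain ⟨W, hW, hWU⟩ := exists_finrank_eq_add_two hline hfix hU hUtop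
  have hWV := W.finrank_le
  rw [show finrank K V - finrank K U = finrank K V - finrank K W + 2 by omega]
  exact (even_finrank_sub hline hfix W hW).add even_two
termination_by finrank K V - finrank K U
decreasing_by omega

theorem even_finrank [FiniteDimensional K V]
    (hline : ∀ v, f (f v) ∈ span K {v, f v}) (hfix : ∀ v, v ≠ 0 → f v ∉ span K {v}) :
    Even (finrank K V) := by
  simpa using even_finrank_sub hline hfix ⊥ bot_le

end SemilinearMap

theorem semilinear_collineation_with_fixed_joining_lines_general
    {K : Type*} [Field K] {V : Type*} [AddCommGroup V] [Module K V]
    [FiniteDimensional K V] (hdim : 4 ≤ Module.finrank K V)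
    (σ : K ≃+* K) (hσ : σ ≠ RingEquiv.refl K)
    (g : V → V)
    (hadd : ∀ x y : V, g (x + y) = g x + g y)
    (hsmul : ∀ (a : K) (v : V), g (a • v) = σ a • g v)
    (hline : ∀ v : V, g (g v) ∈ span K {v, g v})
    (hnofix : ∀ v : V, v ≠ 0 → g v ∉ span K {v}) :
    (∀ a : K, σ (σ a) = a) ∧
    (∃ c : K, c ≠ 0 ∧ ∀ v : V, g (g v) = c • v) ∧
    Even (Module.finrank K V) := by
  let f : V →ₛₗ[(σ : K →+* K)] V := { toFun := g, map_add' := hadd, map_smul' := hsmul }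
  have hσ' : ∃ l, σ l ≠ l := by
    by_contra! h
    exact hσ (RingEquiv.ext h)
  obtain ⟨hσσ, hg⟩ := SemilinearMap.exists_apply_apply_eq_smul (f := f) hline hnofix (by omega) hσ'
  exact ⟨hσσ, hg, SemilinearMap.even_finrank (f := f) hline hnofix⟩

theorem semilinear_collineation_with_fixed_joining_lines
    {K : Type*} [Field K] {V : Type*} [AddCommGroup V] [Module K V]
    [FiniteDimensional K V] (hdim : 4 ≤ Module.finrank K V)
    (σ : K ≃+* K) (hσ : σ ≠ RingEquiv.refl K)
    (g : V → V)
    (hbij : Function.Bijective g)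
    (hadd : ∀ x y : V, g (x + y) = g x + g y)
    (hsmul : ∀ (a : K) (v : V), g (a • v) = σ a • g v)
    (hline : ∀ v : V, g (g v) ∈ span K {v, g v})
    (hnofix : ∀ v : V, v ≠ 0 → g v ∉ span K {v}) :
    (∀ a : K, σ (σ a) = a) ∧
    (∃ c : K, c ≠ 0 ∧ ∀ v : V, g (g v) = c • v) ∧
    Even (Module.finrank K V) :=
  semilinear_collineation_with_fixed_joining_lines_general hdim σ hσ g hadd hsmul hline hnofix
end

section
/- Let K be a field and identify lines of PG(3,K) with 2-dimensional subspaces of K^4. Let L_1, L_2, L_3 be pairwise disjoint lines (pairwise intersecting in 0) and let M be a common transversal: a line such that x_i := M ∩ L_i is 1-dimensional for i = 1,2,3. (a) Let L be a line with x_1 ⊆ L ⊆ L_1 + M and L_1 ≠ L ≠ M. Then the map φ from the points of L_3 to the points of L_3 given by φ(⟨z⟩) = (L + ((L_1 + ⟨z⟩) ∩ L_2)) ∩ L_3 (the projection of L_3 onto L_2 with centre L_1, followed by the projection of L_2 onto L_3 with centre L) has exactly one fixed point, namely x_3. (b) If |K| > 2 and L' is a line with L' ∩ L_1 ≠ 0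 and L' ∩ M ≠ 0, with L' ∩ L_2 = L' ∩ L_3 = 0 and with none of x_1, x_2, x_3 contained in L', then the map ⟨z⟩ ↦ (L' + ((L_1 + ⟨z⟩) ∩ L_2)) ∩ L_3 has exactly two fixed points, one of which is x_3. -/
/-!
Choose `x₁ ∈ L₁` and `x₂ ∈ L₂` with `x₁ + x₂` spanning `M ⊓ L₃`, and `y₁ ∈ L₁`, `y₂ ∈ L₂` with
`y₁ + y₂ ∈ L₃ \ K ∙ (x₁ + x₂)`. By the modular law, `(A ⊔ K ∙ (a + b)) ⊓ B = K ∙ b` whenever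
`A ⊓ B = ⊥`, `a ∈ A` and `b ∈ B`, so each projection just splits a vector along a direct sum.
The projection onto `L₂` with centre `L₁` sends `s • (x₁ + x₂) + t • (y₁ + y₂)` to
`s • x₂ + t • y₂`, and projecting back onto `L₃` acts on the coordinates `(s, t)` by a triangular
matrix. In (a) the line `L` contains `x₁` and some `d • x₂ + y₁` with `d ≠ 0`, the matrix is
`!![1, d; 0, 1]`, and its only eigenline is `K ∙ (x₁ + x₂)`. In (b) the line `L'` contains some
`a • x₁ + y₁` and `e • x₁ + x₂` with `e ≠ 0, 1`, the matrix is proportional to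
`!![-e, a; 0, 1 - e]`, and its two eigenlines are `K ∙ (x₁ + x₂)` and
`K ∙ (a • (x₁ + x₂) + (y₁ + y₂))`.
-/

open Module Submodule

theorem Submodule.sup_span_singleton_inf_eq_of_sub_mem {R M : Type*} [Ring R] [AddCommGroup M]
    [Module R M] {A B : Submodule R M} (hAB : A ⊓ B = ⊥) {v b : M} (hb : b ∈ B)
    (hvb : v - b ∈ A) :
    (A ⊔ R ∙ v) ⊓ B = R ∙ b := by
  have hsup : A ⊔ R ∙ v = (R ∙ b) ⊔ A := by
    apply le_antisymm <;> refine sup_le ?_ ?_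
    · exact le_sup_right
    · rw [span_singleton_le_iff_mem, ← sub_add_cancel v b, add_comm]
      exact add_mem_sup (mem_span_singleton_self b) hvb
    · rw [span_singleton_le_iff_mem, ← sub_sub_self v b]
      exact sub_mem (mem_sup_right (mem_span_singleton_self v)) (mem_sup_left hvb)
    · exact le_sup_left
  rw [hsup, sup_inf_assoc_of_le _ (span_singleton_le_iff_mem _ _ |>.mpr hb), hAB, sup_bot_eq]

section

variable {K V : Type*} [Field K] [AddCommGroup V] [Module K V]

theorem LinearIndependent.span_smul_add_smul_eq_iff {x y : V}
    (hxy : LinearIndependent K ![x, y]) {a b c d : K}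
    (hab : a • x + b • y ≠ 0) (hcd : c • x + d • y ≠ 0) :
    K ∙ (a • x + b • y) = K ∙ (c • x + d • y) ↔ a * d = b * c := by
  constructor
  · rw [span_singleton_eq_span_singleton]
    rintro ⟨r, hr⟩
    obtain ⟨hc, hd⟩ := LinearIndependent.pair_iff.mp hxy ((r : K) * a - c) (r * b - d) (by
      rw [← sub_eq_zero.mpr hr, Units.smul_def]; module)
    linear_combination b * hc - a * hd
  · intro h
    have key : ∀ α β : K, β ≠ 0 → α • (a • x + b • y) = β • (c • x + d • y) →
        K ∙ (a • x + b • y) = K ∙ (c • x + d • y) := fun α β hβ hαβ ↦ by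
      have hα : α ≠ 0 := by
        rintro rfl
        exact smul_ne_zero hβ hcd (by rw [← hαβ, zero_smul])
      rw [← span_singleton_smul_eq hα.isUnit, hαβ, span_singleton_smul_eq hβ.isUnit]
    by_cases hb : b = 0
    · have ha : a ≠ 0 := by rintro rfl; simp [hb] at hab
      exact key c a ha (by linear_combination (norm := module) (-h) • y)
    · exact key d b hb (by linear_combination (norm := module) h • x)

theorem LinearIndependent.span_smul_add_smul_eq_span_left_iff {x y : V}
    (hxy : LinearIndependent K ![x, y]) {s t : K} (hst : s • x + t • y ≠ 0) :
    K ∙ (s • x + t • y) = K ∙ x ↔ t = 0 := by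
  simpa [eq_comm] using
    hxy.span_smul_add_smul_eq_iff (c := 1) (d := 0) hst (by simpa using hxy.ne_zero 0)

theorem Submodule.exists_smul_add_mem_of_inf_span_pair_ne_bot {N : Submodule K V} {x y : V}
    (h : N ⊓ span K {x, y} ≠ ⊥) (hx : x ∉ N) : ∃ a : K, a • x + y ∈ N := by
  obtain ⟨w, ⟨hwN, hw⟩, hw0⟩ := (Submodule.ne_bot_iff _).mp h
  obtain ⟨a, b, rfl⟩ := mem_span_pair.mp hw
  have hb : b ≠ 0 := by
    rintro rfl
    have ha : a ≠ 0 := by rintro rfl; simp at hw0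
    exact hx ((smul_mem_iff _ ha).mp (by simpa using hwN))
  refine ⟨b⁻¹ * a, ?_⟩
  convert N.smul_mem b⁻¹ hwN using 1
  match_scalars <;> field_simp

theorem Submodule.eq_span_singleton_of_finrank_eq_one [FiniteDimensional K V] {S : Submodule K V}
    (hS : finrank K S = 1) {v : V} (hv : v ∈ S) (hv0 : v ≠ 0) : S = K ∙ v :=
  (eq_of_le_of_finrank_eq ((span_singleton_le_iff_mem _ _).mpr hv)
    (by rw [finrank_span_singleton hv0, hS])).symm

theorem Submodule.eq_span_pair_of_finrank_eq_two [FiniteDimensional K V] {S : Submodule K V}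
    (hS : finrank K S = 2) {x y : V} (hxy : LinearIndependent K ![x, y]) (hx : x ∈ S)
    (hy : y ∈ S) : S = span K {x, y} := by
  have hle : span K {x, y} ≤ S := span_le.mpr (Set.pair_subset hx hy)
  refine (eq_of_le_of_finrank_eq hle ?_).symm
  rw [hS, ← Matrix.range_cons_cons_empty x y ![], finrank_span_eq_card hxy]
  simp

theorem Submodule.exists_mem_notMem_span_singleton {S : Submodule K V}
    (hS : 1 < finrank K S) (x : V) : ∃ y ∈ S, y ∉ K ∙ x := by
  by_contra! h
  have := (finrank_mono (h : S ≤ K ∙ x)).trans (finrank_span_le_card ({x} : Set V))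
  simp at this
  omega

theorem Submodule.inf_sup_inf_eq_of_finrank_add [FiniteDimensional K V] {M A B : Submodule K V}
    (hAB : A ⊓ B = ⊥) (h : finrank K ↥(M ⊓ A) + finrank K ↥(M ⊓ B) = finrank K M) :
    M ⊓ A ⊔ M ⊓ B = M := by
  refine eq_of_le_of_finrank_eq (sup_le inf_le_left inf_le_left) ?_
  have hdisj : M ⊓ A ⊓ (M ⊓ B) = ⊥ := eq_bot_iff.mpr (hAB ▸ inf_le_inf inf_le_right inf_le_right)
  have := finrank_sup_add_finrank_inf_eq (M ⊓ A) (M ⊓ B)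
  rw [hdisj, finrank_bot] at this
  omega

structure IsRegulusFrame (L₁ L₂ L₃ M : Submodule K V) (x₁ y₁ x₂ y₂ : V) : Prop where
  inf₁ : M ⊓ L₁ = K ∙ x₁
  inf₂ : M ⊓ L₂ = K ∙ x₂
  inf₃ : M ⊓ L₃ = K ∙ (x₁ + x₂)
  M_eq : M = span K {x₁, x₂}
  L₁_eq : L₁ = span K {x₁, y₁}
  y₂_mem : y₂ ∈ L₂
  L₃_eq : L₃ = span K {x₁ + x₂, y₁ + y₂}
  linearIndependent : LinearIndependent K ![x₁ + x₂, y₁ + y₂]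

theorem exists_isRegulusFrame [FiniteDimensional K V] (hV : finrank K V = 4)
    {L₁ L₂ L₃ M : Submodule K V} (h₁ : finrank K L₁ = 2) (h₂ : finrank K L₂ = 2)
    (h₃ : finrank K L₃ = 2) (hM : finrank K M = 2)
    (h₁₂ : L₁ ⊓ L₂ = ⊥) (h₁₃ : L₁ ⊓ L₃ = ⊥) (h₂₃ : L₂ ⊓ L₃ = ⊥)
    (hx₁ : finrank K ↥(M ⊓ L₁) = 1) (hx₂ : finrank K ↥(M ⊓ L₂) = 1)
    (hx₃ : finrank K ↥(M ⊓ L₃) = 1) :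
    ∃ x₁ y₁ x₂ y₂ : V, IsRegulusFrame L₁ L₂ L₃ M x₁ y₁ x₂ y₂ := by
  have hM_eq : M ⊓ L₁ ⊔ M ⊓ L₂ = M := inf_sup_inf_eq_of_finrank_add h₁₂ (by omega)
  obtain ⟨x₃, hx₃L, hx₃0⟩ := exists_mem_ne_zero_of_ne_bot (p := M ⊓ L₃) fun h ↦ by
    rw [h, finrank_bot] at hx₃; exact zero_ne_one hx₃
  obtain ⟨x₁, hx₁M, x₂, hx₂M, rfl⟩ := mem_sup.mp (hM_eq ▸ hx₃L.1)
  have hx₁0 : x₁ ≠ 0 := by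
    rintro rfl
    rw [zero_add] at hx₃0 hx₃L
    exact hx₃0 ((Submodule.mem_bot K).mp (h₂₃ ▸ ⟨hx₂M.2, hx₃L.2⟩))
  have hx₂0 : x₂ ≠ 0 := by
    rintro rfl
    rw [add_zero] at hx₃0 hx₃L
    exact hx₃0 ((Submodule.mem_bot K).mp (h₁₃ ▸ ⟨hx₁M.2, hx₃L.2⟩))
  have hinf₁ := eq_span_singleton_of_finrank_eq_one hx₁ hx₁M hx₁0
  have hinf₂ := eq_span_singleton_of_finrank_eq_one hx₂ hx₂M hx₂0
  obtain ⟨y₃, hy₃, hy₃x⟩ := exists_mem_notMem_span_singleton (h₃ ▸ one_lt_two) (x₁ + x₂)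
  have hL₁₂ : L₁ ⊔ L₂ = ⊤ := eq_top_of_disjoint L₁ L₂ (by omega) (disjoint_iff.mpr h₁₂)
  obtain ⟨y₁, hy₁, y₂, hy₂, rfl⟩ := mem_sup.mp (hL₁₂ ▸ mem_top : y₃ ∈ L₁ ⊔ L₂)
  have hind₃ : LinearIndependent K ![x₁ + x₂, y₁ + y₂] :=
    (LinearIndependent.pair_iff' hx₃0).mpr fun a h ↦ hy₃x (h ▸ mem_span_singleton.mpr ⟨a, rfl⟩)
  have hind₁ : LinearIndependent K ![x₁, y₁] := by
    refine (LinearIndependent.pair_iff' hx₁0).mpr fun a h ↦ hy₃x (mem_span_singleton.mpr ⟨a, ?_⟩)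
    have : y₂ - a • x₂ ∈ L₂ ⊓ L₃ := by
      refine ⟨sub_mem hy₂ (smul_mem _ a hx₂M.2), ?_⟩
      rw [show y₂ - a • x₂ = (y₁ + y₂) - a • (x₁ + x₂) by rw [← h]; module]
      exact sub_mem hy₃ (smul_mem _ a hx₃L.2)
    rw [h₂₃, Submodule.mem_bot, sub_eq_zero] at this
    rw [← h, this, smul_add]
  exact ⟨x₁, y₁, x₂, y₂, hinf₁, hinf₂, eq_span_singleton_of_finrank_eq_one hx₃ hx₃L hx₃0,
    by rw [span_insert, ← hinf₁, ← hinf₂, hM_eq],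
    eq_span_pair_of_finrank_eq_two h₁ hind₁ hx₁M.2 hy₁,
    hy₂, eq_span_pair_of_finrank_eq_two h₃ hind₃ hx₃L.2 hy₃, hind₃⟩

namespace IsRegulusFrame

variable {L₁ L₂ L₃ M : Submodule K V} {x₁ y₁ x₂ y₂ : V}

theorem x₁_mem (hF : IsRegulusFrame L₁ L₂ L₃ M x₁ y₁ x₂ y₂) : x₁ ∈ L₁ :=
  hF.L₁_eq ▸ subset_span (by simp)

theorem y₁_mem (hF : IsRegulusFrame L₁ L₂ L₃ M x₁ y₁ x₂ y₂) : y₁ ∈ L₁ :=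
  hF.L₁_eq ▸ subset_span (by simp)

theorem x₂_mem (hF : IsRegulusFrame L₁ L₂ L₃ M x₁ y₁ x₂ y₂) : x₂ ∈ L₂ :=
  (hF.inf₂ ▸ mem_span_singleton_self x₂ : x₂ ∈ M ⊓ L₂).2

theorem x₁_add_x₂_mem (hF : IsRegulusFrame L₁ L₂ L₃ M x₁ y₁ x₂ y₂) : x₁ + x₂ ∈ L₃ :=
  hF.L₃_eq ▸ subset_span (by simp)

theorem y₁_add_y₂_mem (hF : IsRegulusFrame L₁ L₂ L₃ M x₁ y₁ x₂ y₂) : y₁ + y₂ ∈ L₃ :=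
  hF.L₃_eq ▸ subset_span (by simp)

theorem composite_projection_eq (hF : IsRegulusFrame L₁ L₂ L₃ M x₁ y₁ x₂ y₂) (h₁₂ : L₁ ⊓ L₂ = ⊥)
    {N : Submodule K V} (hN : N ⊓ L₃ = ⊥) {s t c : K} (hc : c ≠ 0) {u : V} (hu : u ∈ L₃)
    (hcu : c • (s • x₂ + t • y₂) - u ∈ N) :
    (N ⊔ (L₁ ⊔ K ∙ (s • (x₁ + x₂) + t • (y₁ + y₂))) ⊓ L₂) ⊓ L₃ = K ∙ u := by
  have hv : s • (x₁ + x₂) + t • (y₁ + y₂) - (s • x₂ + t • y₂) ∈ L₁ := by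
    convert add_mem (smul_mem _ s hF.x₁_mem) (smul_mem _ t hF.y₁_mem) using 2
    module
  rw [sup_span_singleton_inf_eq_of_sub_mem h₁₂
      (add_mem (smul_mem _ s hF.x₂_mem) (smul_mem _ t hF.y₂_mem)) hv,
    ← span_singleton_smul_eq hc.isUnit, sup_span_singleton_inf_eq_of_sub_mem hN hu hcu]

theorem sup_transversal_eq (hF : IsRegulusFrame L₁ L₂ L₃ M x₁ y₁ x₂ y₂) :
    L₁ ⊔ M = L₁ ⊔ K ∙ x₂ := by
  rw [hF.M_eq, span_insert, ← sup_assoc,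
    sup_eq_left.mpr ((span_singleton_le_iff_mem _ _).mpr hF.x₁_mem)]

theorem sup_transversal_inf_eq (hF : IsRegulusFrame L₁ L₂ L₃ M x₁ y₁ x₂ y₂)
    (h₁₃ : L₁ ⊓ L₃ = ⊥) : (L₁ ⊔ M) ⊓ L₃ = K ∙ (x₁ + x₂) :=
  hF.sup_transversal_eq ▸ sup_span_singleton_inf_eq_of_sub_mem h₁₃ hF.x₁_add_x₂_mem
    (by rw [show x₂ - (x₁ + x₂) = -x₁ by abel]; exact neg_mem hF.x₁_mem)

theorem inf_eq_bot_of_le_sup (hF : IsRegulusFrame L₁ L₂ L₃ M x₁ y₁ x₂ y₂) (h₁₃ : L₁ ⊓ L₃ = ⊥)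
    {L : Submodule K V} (hLle : L ≤ L₁ ⊔ M) (hx₁L : x₁ ∈ L) (hx₂L : x₂ ∉ L) : L ⊓ L₃ = ⊥ := by
  rw [← inf_eq_left.mpr hLle, inf_assoc, hF.sup_transversal_inf_eq h₁₃, ← disjoint_iff,
    disjoint_span_singleton' (by simpa using hF.linearIndependent.ne_zero 0)]
  exact fun h ↦ hx₂L (by simpa using sub_mem h hx₁L)

theorem exists_smul_add_mem_of_le_sup (hF : IsRegulusFrame L₁ L₂ L₃ M x₁ y₁ x₂ y₂)
    {L : Submodule K V} (hL : 1 < finrank K L)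
    (hLle : L ≤ L₁ ⊔ M) (hx₁L : x₁ ∈ L) (hx₂L : x₂ ∉ L) : ∃ d : K, d • x₂ + y₁ ∈ L := by
  refine exists_smul_add_mem_of_inf_span_pair_ne_bot ?_ hx₂L
  obtain ⟨w, hwL, hw⟩ := exists_mem_notMem_span_singleton hL x₁
  obtain ⟨l, hl, c, hc, rfl⟩ := mem_sup.mp (hF.sup_transversal_eq ▸ hLle hwL)
  obtain ⟨α, β, rfl⟩ := mem_span_pair.mp (hF.L₁_eq ▸ hl)
  obtain ⟨γ, rfl⟩ := mem_span_singleton.mp hc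
  refine (Submodule.ne_bot_iff _).mpr ⟨γ • x₂ + β • y₁, ⟨?_, mem_span_pair.mpr ⟨γ, β, rfl⟩⟩, ?_⟩
  · rw [show γ • x₂ + β • y₁ = α • x₁ + β • y₁ + γ • x₂ - α • x₁ by abel]
    exact sub_mem hwL (smul_mem _ α hx₁L)
  · intro h
    exact hw (mem_span_singleton.mpr ⟨α, by rw [add_assoc, add_comm (β • y₁), h, add_zero]⟩)

theorem fixed_iff_of_le_sup [FiniteDimensional K V] (hF : IsRegulusFrame L₁ L₂ L₃ M x₁ y₁ x₂ y₂)
    (h₁ : finrank K L₁ = 2) (hM : finrank K M = 2) (h₁₂ : L₁ ⊓ L₂ = ⊥) (h₁₃ : L₁ ⊓ L₃ = ⊥)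
    {L : Submodule K V} (hL : finrank K L = 2) (hx₁L : M ⊓ L₁ ≤ L) (hLle : L ≤ L₁ ⊔ M)
    (hLL₁ : L ≠ L₁) (hLM : L ≠ M) {z : V} (hz : z ∈ L₃) (hz0 : z ≠ 0) :
    (L ⊔ (L₁ ⊔ K ∙ z) ⊓ L₂) ⊓ L₃ = K ∙ z ↔ K ∙ z = M ⊓ L₃ := by
  rw [hF.inf₁, span_singleton_le_iff_mem] at hx₁L
  have hx₂L : x₂ ∉ L := fun h ↦ hLM (eq_of_le_of_finrank_eq
    (hF.M_eq ▸ span_le.mpr (Set.pair_subset hx₁L h)) (by rw [hM, hL])).symm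
  have hy₁L : y₁ ∉ L := fun h ↦ hLL₁ (eq_of_le_of_finrank_eq
    (hF.L₁_eq ▸ span_le.mpr (Set.pair_subset hx₁L h)) (by rw [h₁, hL])).symm
  obtain ⟨d, hd⟩ := hF.exists_smul_add_mem_of_le_sup (by omega) hLle hx₁L hx₂L
  have hd0 : d ≠ 0 := by rintro rfl; exact hy₁L (by simpa using hd)
  obtain ⟨s, t, rfl⟩ := mem_span_pair.mp (hF.L₃_eq ▸ hz)
  have hu : (1 : K) • (s • x₂ + t • y₂) - ((s + t * d) • (x₁ + x₂) + t • (y₁ + y₂)) ∈ L := by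
    convert neg_mem (add_mem (smul_mem _ (s + t * d) hx₁L) (smul_mem _ t hd)) using 2
    module
  have hu0 : (s + t * d) • (x₁ + x₂) + t • (y₁ + y₂) ≠ 0 := by
    intro h
    obtain ⟨h1, rfl⟩ := LinearIndependent.pair_iff.mp hF.linearIndependent _ _ h
    exact hz0 (by simp_all)
  rw [hF.composite_projection_eq h₁₂ (hF.inf_eq_bot_of_le_sup h₁₃ hLle hx₁L hx₂L) one_ne_zero
    (add_mem (smul_mem _ _ hF.x₁_add_x₂_mem) (smul_mem _ _ hF.y₁_add_y₂_mem)) hu, hF.inf₃,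
    hF.linearIndependent.span_smul_add_smul_eq_iff hu0 hz0,
    hF.linearIndependent.span_smul_add_smul_eq_span_left_iff hz0]
  constructor
  · intro h
    have : t * t * d = 0 := by linear_combination h
    simpa [hd0] using this
  · rintro rfl
    ring

theorem exists_smul_add_mem_of_inf_ne_bot (hF : IsRegulusFrame L₁ L₂ L₃ M x₁ y₁ x₂ y₂)
    {L' : Submodule K V} (hL'₁ : L' ⊓ L₁ ≠ ⊥) (hL'M : L' ⊓ M ≠ ⊥) (hx₁L' : x₁ ∉ L')
    (hx₂L' : x₂ ∉ L') (hx₃L' : x₁ + x₂ ∉ L') :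
    ∃ a e : K, e ≠ 0 ∧ 1 - e ≠ 0 ∧ a • x₁ + y₁ ∈ L' ∧ e • x₁ + x₂ ∈ L' := by
  obtain ⟨a, ha⟩ := exists_smul_add_mem_of_inf_span_pair_ne_bot (hF.L₁_eq ▸ hL'₁) hx₁L'
  obtain ⟨e, he⟩ := exists_smul_add_mem_of_inf_span_pair_ne_bot (hF.M_eq ▸ hL'M) hx₁L'
  refine ⟨a, e, ?_, fun h ↦ hx₃L' ?_, ha, he⟩
  · rintro rfl
    exact hx₂L' (by simpa using he)
  · rwa [← sub_eq_zero.mp h, one_smul] at he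

theorem exists_two_fixed_points (hF : IsRegulusFrame L₁ L₂ L₃ M x₁ y₁ x₂ y₂)
    (h₁₂ : L₁ ⊓ L₂ = ⊥) {L' : Submodule K V} (hL'₁ : L' ⊓ L₁ ≠ ⊥) (hL'M : L' ⊓ M ≠ ⊥)
    (hL'₃ : L' ⊓ L₃ = ⊥) (hx₁L' : ¬ M ⊓ L₁ ≤ L') (hx₂L' : ¬ M ⊓ L₂ ≤ L')
    (hx₃L' : ¬ M ⊓ L₃ ≤ L') :
    ∃ P : Submodule K V, P ≠ M ⊓ L₃ ∧
      (∃ z : V, z ≠ 0 ∧ z ∈ L₃ ∧ P = K ∙ z) ∧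
      ∀ z : V, z ∈ L₃ → z ≠ 0 →
        ((L' ⊔ (L₁ ⊔ K ∙ z) ⊓ L₂) ⊓ L₃ = K ∙ z ↔ K ∙ z = M ⊓ L₃ ∨ K ∙ z = P) := by
  rw [hF.inf₁, span_singleton_le_iff_mem] at hx₁L'
  rw [hF.inf₂, span_singleton_le_iff_mem] at hx₂L'
  rw [hF.inf₃, span_singleton_le_iff_mem] at hx₃L'
  obtain ⟨a, e, he0, he1, ha, he⟩ :=
    hF.exists_smul_add_mem_of_inf_ne_bot hL'₁ hL'M hx₁L' hx₂L' hx₃L'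
  have hind := hF.linearIndependent
  have hP0 : a • (x₁ + x₂) + (1 : K) • (y₁ + y₂) ≠ 0 := fun h ↦
    one_ne_zero (LinearIndependent.pair_iff.mp hind _ _ h).2
  refine ⟨K ∙ (a • (x₁ + x₂) + (1 : K) • (y₁ + y₂)), ?_, ⟨_, hP0,
    add_mem (smul_mem _ _ hF.x₁_add_x₂_mem) (smul_mem _ _ hF.y₁_add_y₂_mem), rfl⟩, ?_⟩
  · rw [Ne, hF.inf₃, hind.span_smul_add_smul_eq_span_left_iff hP0]
    exact one_ne_zero
  intro z hz hz0
  obtain ⟨s, t, rfl⟩ := mem_span_pair.mp (hF.L₃_eq ▸ hz)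
  have hu : (1 - e) • (s • x₂ + t • y₂) -
      ((a * t - e * s) • (x₁ + x₂) + (t * (1 - e)) • (y₁ + y₂)) ∈ L' := by
    convert neg_mem (add_mem (smul_mem _ (t * (1 - e)) ha) (smul_mem _ (a * t - s) he)) using 2
    module
  have hu0 : (a * t - e * s) • (x₁ + x₂) + (t * (1 - e)) • (y₁ + y₂) ≠ 0 := by
    intro h
    obtain ⟨h1, h2⟩ := LinearIndependent.pair_iff.mp hind _ _ h
    obtain rfl : t = 0 := by simpa [he1] using h2
    obtain rfl : s = 0 := by simpa [he0] using h1
    exact hz0 (by simp)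
  rw [hF.composite_projection_eq h₁₂ hL'₃ he1
    (add_mem (smul_mem _ _ hF.x₁_add_x₂_mem) (smul_mem _ _ hF.y₁_add_y₂_mem)) hu, hF.inf₃,
    hind.span_smul_add_smul_eq_iff hu0 hz0, hind.span_smul_add_smul_eq_span_left_iff hz0,
    hind.span_smul_add_smul_eq_iff hz0 hP0]
  constructor
  · intro h
    have : t * (a * t - s) = 0 := by linear_combination h
    rcases mul_eq_zero.mp this with ht | hs
    · exact Or.inl ht
    · exact Or.inr (by linear_combination -hs)
  · rintro (rfl | h)
    · ring
    · linear_combination -t * h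

end IsRegulusFrame

end

theorem regulus_projections_fixed_points
    {K : Type} [Field K]
    (L₁ L₂ L₃ M : Submodule K (Fin 4 → K))
    (h₁ : finrank K L₁ = 2) (h₂ : finrank K L₂ = 2) (h₃ : finrank K L₃ = 2)
    (hM : finrank K M = 2)
    (h₁₂ : L₁ ⊓ L₂ = ⊥) (h₁₃ : L₁ ⊓ L₃ = ⊥) (h₂₃ : L₂ ⊓ L₃ = ⊥)
    (hx₁ : finrank K ↥(M ⊓ L₁) = 1) (hx₂ : finrank K ↥(M ⊓ L₂) = 1)
    (hx₃ : finrank K ↥(M ⊓ L₃) = 1) :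
    -- (a)
    (∀ L : Submodule K (Fin 4 → K), finrank K L = 2 →
      M ⊓ L₁ ≤ L → L ≤ L₁ ⊔ M → L ≠ L₁ → L ≠ M →
      ∀ z : Fin 4 → K, z ∈ L₃ → z ≠ 0 →
        (((L ⊔ ((L₁ ⊔ span K {z}) ⊓ L₂)) ⊓ L₃ = span K {z}) ↔
          span K {z} = M ⊓ L₃)) ∧
    -- (b)
    ((∃ a : K, a ≠ 0 ∧ a ≠ 1) →  -- |K| > 2
      ∀ L' : Submodule K (Fin 4 → K), finrank K L' = 2 →
      L' ⊓ L₁ ≠ ⊥ → L' ⊓ M ≠ ⊥ → L' ⊓ L₂ = ⊥ → L' ⊓ L₃ = ⊥ →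
      ¬ (M ⊓ L₁ ≤ L') → ¬ (M ⊓ L₂ ≤ L') → ¬ (M ⊓ L₃ ≤ L') →
      ∃ P : Submodule K (Fin 4 → K), P ≠ M ⊓ L₃ ∧
        (∃ z : Fin 4 → K, z ≠ 0 ∧ z ∈ L₃ ∧ P = span K {z}) ∧
        ∀ z : Fin 4 → K, z ∈ L₃ → z ≠ 0 →
          (((L' ⊔ ((L₁ ⊔ span K {z}) ⊓ L₂)) ⊓ L₃ = span K {z}) ↔
            (span K {z} = M ⊓ L₃ ∨ span K {z} = P))) := by
  obtain ⟨x₁, y₁, x₂, y₂, hF⟩ :=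
    exists_isRegulusFrame (by simp) h₁ h₂ h₃ hM h₁₂ h₁₃ h₂₃ hx₁ hx₂ hx₃
  exact ⟨fun L hL hx₁L hLle hLL₁ hLM z hz hz0 ↦
      hF.fixed_iff_of_le_sup h₁ hM h₁₂ h₁₃ hL hx₁L hLle hLL₁ hLM hz hz0,
    fun _ L' _ hL'₁ hL'M _ hL'₃ hx₁L' hx₂L' hx₃L' ↦
      hF.exists_two_fixed_points h₁₂ hL'₁ hL'M hL'₃ hx₁L' hx₂L' hx₃L'⟩
end
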